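/- arXiv:math/0312065 — 6 statements merged into one kernel-verified Lean document; each statement's English description precedes it below -/
import Mathlib

section
/- Let K ⊂ ℝⁿ be a symmetric convex body and suppose the identity operator minimizes S ↦ trace(S) over all symmetric positive-definite operators S satisfying ⟨x, Sx⟩ ≥ 1 for all x ∈ ∂K (equivalently, the unit ball is the ellipsoid contained in K minimizing M_E). Then there exist finitely many points u₁,...,u_s ∈ ∂K with |uᵢ| = 1 (contact points of the unit ball with ∂K) and positive reals λ₁,...,λ_s such that Σᵢ λᵢ uᵢ ⊗ uᵢ = Id, i.e., Σᵢ λᵢ ⟨uᵢ, θ⟩² = |θ|² for all θ ∈ ℝⁿ. -/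
/-!
If `(finrank)⁻¹ • id` were not a convex combination of the operators `u ⊗ u` at the contact
points (`u ∈ ∂K`, `‖u‖ = 1`), a functional separating it from their convex hull (compact, by
Carathéodory) would give a symmetric `H` with `⟪u, H u⟫ > 0` at every contact point and
`trace H < 0`. The constraint `⟪x, x⟫ ≥ 1` on `∂K` is tight exactly at the contact points, so by
compactness of `∂K` the operator `id + ε • H` is still admissible for small `ε > 0`, and its trace
is smaller than that of `id`.
-/

open MeasureTheory Metric
open Set Filter Topology InnerProductSpace Module

theorem IsCompact.convexHull {E : Type*} [AddCommGroup E] [Module ℝ E] [TopologicalSpace E]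
    [IsTopologicalAddGroup E] [ContinuousSMul ℝ E] [FiniteDimensional ℝ E] {s : Set E}
    (hs : IsCompact s) : IsCompact (_root_.convexHull ℝ s) := by
  let comb (k : ℕ) (p : (Fin k → ℝ) × (Fin k → E)) : E := ∑ i, p.1 i • p.2 i
  have hunion : _root_.convexHull ℝ s = ⋃ k ∈ Finset.range (finrank ℝ E + 2),
      comb k '' (stdSimplex ℝ (Fin k) ×ˢ univ.pi fun _ => s) := by
    refine Subset.antisymm (fun x hx => ?_) ?_
    · obtain ⟨ι, _, z, w, hzs, hind, hw0, hw1, rfl⟩ := eq_pos_convex_span_of_mem_convexHull hx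
      let e := (Fintype.equivFin ι).symm
      have hcard : Fintype.card ι < finrank ℝ E + 2 :=
        (hind.card_le_finrank_succ.trans (by grw [Submodule.finrank_le])).trans_lt (by omega)
      refine mem_biUnion (Finset.mem_coe.2 (Finset.mem_range.2 hcard))
        ⟨(w ∘ e, z ∘ e), ⟨⟨fun i => (hw0 _).le, ?_⟩, fun i _ => hzs (mem_range_self _)⟩, ?_⟩
      · rw [← hw1]; exact e.sum_comp w
      · exact e.sum_comp fun i => w i • z i
    · simp only [iUnion_subset_iff]
      rintro k - _ ⟨⟨w, z⟩, ⟨⟨hw0, hw1⟩, hz⟩, rfl⟩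
      exact mem_convexHull_of_exists_fintype w z hw0 hw1 (fun i => hz i (mem_univ i)) rfl
  rw [hunion]
  exact (Finset.range _).isCompact_biUnion fun k _ =>
    ((isCompact_stdSimplex ℝ (Fin k)).prod (isCompact_univ_pi fun _ => hs)).image (by fun_prop)

theorem IsCompact.eventually_forall_nonneg_add_mul {X : Type*} [TopologicalSpace X] {Z : Set X}
    (hZ : IsCompact Z) {g q : X → ℝ} (hg : Continuous g) (hq : Continuous q)
    (hgZ : ∀ x ∈ Z, 0 ≤ g x) (hqZ : ∀ x ∈ Z, g x = 0 → 0 < q x) :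
    ∀ᶠ ε in 𝓝[>] (0 : ℝ), ∀ x ∈ Z, 0 ≤ g x + ε * q x := by
  -- `x ∈ Z` is repeated so that it is still available near `(0, y)` below.
  suffices ∀ᶠ ε in 𝓝 (0 : ℝ), ∀ x ∈ Z, x ∈ Z → 0 < ε → 0 ≤ g x + ε * q x from
    (eventually_nhdsWithin_of_eventually_nhds this).and self_mem_nhdsWithin |>.mono
      fun ε h x hx => h.1 x hx hx h.2
  refine hZ.eventually_forall_of_forall_eventually fun y hy => ?_
  rcases (hgZ y hy).lt_or_eq with hgy | hgy
  · have hcont : Continuous fun p : ℝ × X => g p.2 + p.1 * q p.2 := by fun_prop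
    filter_upwards [continuousAt_const.eventually_lt hcont.continuousAt (by simpa using hgy)]
      with p hp _ _ using hp.le
  · have hcont : Continuous fun p : ℝ × X => q p.2 := by fun_prop
    filter_upwards [continuousAt_const.eventually_lt hcont.continuousAt (hqZ y hy hgy.symm)]
      with p hp hpZ hε using add_nonneg (hgZ _ hpZ) (mul_pos hε hp).le

section InnerProductSpace

variable {E : Type*} [NormedAddCommGroup E] [InnerProductSpace ℝ E] [FiniteDimensional ℝ E]

theorem LinearMap.exists_isSymmetric_inner_eq (B : E →ₗ[ℝ] E →ₗ[ℝ] ℝ)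
    (hB : ∀ x y, B x y = B y x) :
    ∃ T : E →ₗ[ℝ] E, T.IsSymmetric ∧ ∀ x y, ⟪x, T y⟫_ℝ = B x y := by
  let b := stdOrthonormalBasis ℝ E
  let T : E →ₗ[ℝ] E := ∑ i, (B (b i)).smulRight (b i)
  have hT : ∀ x y, ⟪x, T y⟫_ℝ = B x y := fun x y => by
    conv_rhs => rw [← b.sum_repr' x]
    simp [T, inner_sum, inner_smul_right, real_inner_comm, mul_comm]
  exact ⟨T, fun x y => by rw [real_inner_comm, hT, hT, hB], hT⟩

theorem exists_isSymmetric_inner_self_eq_rankOne (f : (E →L[ℝ] E) →ₗ[ℝ] ℝ) :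
    ∃ T : E →ₗ[ℝ] E, T.IsSymmetric ∧ (∀ u, ⟪u, T u⟫_ℝ = f (rankOne ℝ u u)) ∧
      T.trace ℝ E = f (.id ℝ E) := by
  let B : E →ₗ[ℝ] E →ₗ[ℝ] ℝ :=
    LinearMap.mk₂ ℝ (fun x y => (f (rankOne ℝ x y) + f (rankOne ℝ y x)) / 2)
      (fun _ _ _ => by simp only [map_add, add_apply]; ring)
      (fun _ _ _ => by simp only [map_smul, smul_apply, smul_eq_mul]; ring)
      (fun _ _ _ => by simp only [map_add, add_apply]; ring)
      (fun _ _ _ => by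
        simp only [map_smulₛₗ, smul_apply, smul_eq_mul, conj_trivial, RingHom.id_apply]; ring)
  obtain ⟨T, hT, hTB⟩ := LinearMap.exists_isSymmetric_inner_eq B fun x y => by simp [B, add_comm]
  have hTu : ∀ u, ⟪u, T u⟫_ℝ = f (rankOne ℝ u u) := fun u => by simp [hTB, B]
  refine ⟨T, hT, hTu, ?_⟩
  let b := stdOrthonormalBasis ℝ E
  rw [LinearMap.trace_eq_sum_inner T b]
  simp only [hTu, ← map_sum, b.sum_rankOne_eq_id]

theorem LinearMap.eventually_inner_id_add_smul_pos (H : E →ₗ[ℝ] E) :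
    ∀ᶠ ε in 𝓝 (0 : ℝ), ∀ x : E, x ≠ 0 → 0 < ⟪x, (LinearMap.id + ε • H : E →ₗ[ℝ] E) x⟫_ℝ := by
  let H' := LinearMap.toContinuousLinearMap H
  have hsmall : ∀ᶠ ε in 𝓝 (0 : ℝ), |ε| * ‖H'‖ < 1 :=
    (continuous_abs.mul continuous_const).continuousAt.eventually_lt continuousAt_const
      (by simp)
  filter_upwards [hsmall] with ε hε x hx
  have hHx : |⟪x, H x⟫_ℝ| ≤ ‖H'‖ * ‖x‖ ^ 2 :=
    calc |⟪x, H x⟫_ℝ| ≤ ‖x‖ * ‖H' x‖ := abs_real_inner_le_norm _ _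
      _ ≤ ‖x‖ * (‖H'‖ * ‖x‖) := by gcongr; exact H'.le_opNorm x
      _ = ‖H'‖ * ‖x‖ ^ 2 := by ring
  have hx2 : 0 < ‖x‖ ^ 2 := by positivity
  have := abs_le.1 ((abs_mul ε _).trans_le (mul_le_mul_of_nonneg_left hHx (abs_nonneg ε)))
  simp only [LinearMap.add_apply, LinearMap.id_apply, LinearMap.smul_apply, inner_add_right,
    real_inner_smul_right, real_inner_self_eq_norm_sq]
  nlinarith

theorem LinearMap.IsSymmetric.trace_nonneg_of_min_trace {Z : Set E} (hZ : IsCompact Z)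
    (hZ1 : ∀ x ∈ Z, 1 ≤ ⟪x, x⟫_ℝ)
    (hmin : ∀ S : E →ₗ[ℝ] E, S.IsSymmetric → (∀ x : E, x ≠ 0 → 0 < ⟪x, S x⟫_ℝ) →
      (∀ x ∈ Z, 1 ≤ ⟪x, S x⟫_ℝ) → LinearMap.trace ℝ E LinearMap.id ≤ LinearMap.trace ℝ E S)
    {H : E →ₗ[ℝ] E} (hH : H.IsSymmetric) (hHZ : ∀ x ∈ Z ∩ sphere 0 1, 0 < ⟪x, H x⟫_ℝ) :
    0 ≤ H.trace ℝ E := by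
  have hadm : ∀ᶠ ε in 𝓝[>] (0 : ℝ), ∀ x ∈ Z, 0 ≤ (⟪x, x⟫_ℝ - 1) + ε * ⟪x, H x⟫_ℝ := by
    refine hZ.eventually_forall_nonneg_add_mul (by fun_prop)
      (continuous_id.inner H.continuous_of_finiteDimensional)
      (fun x hx => sub_nonneg.2 (hZ1 x hx)) fun x hx hx1 => hHZ x ⟨hx, ?_⟩
    rw [real_inner_self_eq_norm_sq, sub_eq_zero] at hx1
    simpa using (pow_eq_one_iff_of_nonneg (norm_nonneg x) two_ne_zero).1 hx1
  obtain ⟨ε, ⟨hpos, hadm⟩, hε⟩ :=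
    ((eventually_nhdsWithin_of_eventually_nhds H.eventually_inner_id_add_smul_pos).and hadm
      |>.and self_mem_nhdsWithin).exists
  have htr := hmin (LinearMap.id + ε • H)
    (LinearMap.IsSymmetric.id.add (hH.smul (conj_trivial ε))) hpos fun x hx => by
      have := hadm x hx
      simp only [LinearMap.add_apply, LinearMap.id_apply, LinearMap.smul_apply, inner_add_right,
        real_inner_smul_right]
      linarith
  rw [map_add, map_smul, smul_eq_mul, le_add_iff_nonneg_right] at htr
  exact nonneg_of_mul_nonneg_right htr hε

theorem exists_isSymmetric_trace_neg_of_notMem_convexHull [Nontrivial E] {C : Set E}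
    (hC : IsCompact C) (hC1 : C ⊆ sphere 0 1)
    (h : (finrank ℝ E : ℝ)⁻¹ • ContinuousLinearMap.id ℝ E ∉
      convexHull ℝ ((fun u => rankOne ℝ u u) '' C)) :
    ∃ H : E →ₗ[ℝ] E, H.IsSymmetric ∧ (∀ u ∈ C, 0 < ⟪u, H u⟫_ℝ) ∧ H.trace ℝ E < 0 := by
  have hcont : Continuous fun u : E => rankOne ℝ u u :=
    (rankOne ℝ (E := E) (F := E)).continuous₂.comp (continuous_id.prodMk continuous_id)
  obtain ⟨f, c, hf, hcf⟩ := geometric_hahn_banach_closed_point (convex_convexHull ℝ _)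
    (hC.image hcont).convexHull.isClosed h
  obtain ⟨T, hT, hTu, hTtr⟩ :=
    exists_isSymmetric_inner_self_eq_rankOne (f : (E →L[ℝ] E) →ₗ[ℝ] ℝ)
  simp only [ContinuousLinearMap.coe_coe] at hTu hTtr
  refine ⟨c • LinearMap.id - T, (LinearMap.IsSymmetric.id.smul (conj_trivial c)).sub hT,
    fun u hu => ?_, ?_⟩
  · have hfu := hf _ (subset_convexHull ℝ _ ⟨u, hu, rfl⟩)
    have hu1 : ‖u‖ = 1 := by simpa using hC1 hu
    simp only [LinearMap.sub_apply, LinearMap.smul_apply, LinearMap.id_apply, inner_sub_right,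
      real_inner_smul_right, real_inner_self_eq_norm_sq, hu1, hTu]
    linarith
  · have hn : (0 : ℝ) < finrank ℝ E := by exact_mod_cast finrank_pos
    rw [map_sub, map_smul, LinearMap.trace_id, hTtr, smul_eq_mul]
    rw [map_smul, smul_eq_mul, lt_inv_mul_iff₀ hn] at hcf
    linarith

theorem exists_sum_mul_inner_sq_eq_norm_sq {C : Set E} (hC : IsCompact C) (hC1 : C ⊆ sphere 0 1)
    (htrace : ∀ H : E →ₗ[ℝ] E, H.IsSymmetric → (∀ u ∈ C, 0 < ⟪u, H u⟫_ℝ) → 0 ≤ H.trace ℝ E) :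
    ∃ (s : ℕ) (u : Fin s → E) (l : Fin s → ℝ), (∀ i, u i ∈ C) ∧ (∀ i, 0 < l i) ∧
      ∀ θ, ∑ i, l i * ⟪u i, θ⟫_ℝ ^ 2 = ‖θ‖ ^ 2 := by
  rcases subsingleton_or_nontrivial E with hE | hE
  · exact ⟨0, finZeroElim, finZeroElim, finZeroElim, finZeroElim,
      fun θ => by simp [Subsingleton.elim θ 0]⟩
  have hmem : (finrank ℝ E : ℝ)⁻¹ • ContinuousLinearMap.id ℝ E ∈
      convexHull ℝ ((fun u => rankOne ℝ u u) '' C) := by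
    by_contra h
    obtain ⟨H, hH, hHC, hHtr⟩ := exists_isSymmetric_trace_neg_of_notMem_convexHull hC hC1 h
    exact hHtr.not_ge (htrace H hH hHC)
  obtain ⟨ι, _, z, w, hzC, -, hw0, -, hsum⟩ := eq_pos_convex_span_of_mem_convexHull hmem
  choose u huC hu using fun i => hzC (mem_range_self i)
  let e := (Fintype.equivFin ι).symm
  have hn : (0 : ℝ) < finrank ℝ E := by exact_mod_cast finrank_pos
  refine ⟨_, u ∘ e, fun i => finrank ℝ E * w (e i), fun i => huC _,
    fun i => mul_pos hn (hw0 _), fun θ => ?_⟩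
  have hθ := congrArg (fun T : E →L[ℝ] E => ⟪T θ, θ⟫_ℝ) hsum
  simp only [← hu, sum_apply, smul_apply, rankOne_apply, sum_inner, real_inner_smul_left,
    ContinuousLinearMap.id_apply, real_inner_self_eq_norm_sq, ← sq] at hθ
  simp only [Function.comp_apply, mul_assoc, ← Finset.mul_sum,
    e.sum_comp fun i => w i * ⟪u i, θ⟫_ℝ ^ 2, hθ, mul_inv_cancel_left₀ hn.ne']

end InnerProductSpace

theorem john_decomposition_of_min_trace_general
    (n : ℕ) (K : Set (EuclideanSpace ℝ (Fin n)))
    (hKcomp : IsCompact K)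
    (hIdadm : ∀ x ∈ frontier K, 1 ≤ (inner ℝ x x : ℝ))
    (hmin : ∀ S : EuclideanSpace ℝ (Fin n) →ₗ[ℝ] EuclideanSpace ℝ (Fin n),
      LinearMap.IsSymmetric S → (∀ x : EuclideanSpace ℝ (Fin n), x ≠ 0 → 0 < (inner ℝ x (S x) : ℝ)) →
      (∀ x ∈ frontier K, 1 ≤ (inner ℝ x (S x) : ℝ)) →
      LinearMap.trace ℝ (EuclideanSpace ℝ (Fin n)) LinearMap.id
        ≤ LinearMap.trace ℝ (EuclideanSpace ℝ (Fin n)) S) :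
    ∃ (s : ℕ) (u : Fin s → EuclideanSpace ℝ (Fin n)) (l : Fin s → ℝ),
      (∀ i, u i ∈ frontier K) ∧ (∀ i, ‖u i‖ = 1) ∧ (∀ i, 0 < l i) ∧
      (∀ θ : EuclideanSpace ℝ (Fin n),
        ∑ i, l i * (inner ℝ (u i) θ : ℝ) ^ 2 = ‖θ‖ ^ 2) := by
  have hfrontier : IsCompact (frontier K) :=
    hKcomp.of_isClosed_subset isClosed_frontier hKcomp.isClosed.frontier_subset
  obtain ⟨s, u, l, hu, hl, hsum⟩ := exists_sum_mul_inner_sq_eq_norm_sq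
    (hfrontier.inter_right isClosed_sphere) inter_subset_right
    fun H hH hHC => hH.trace_nonneg_of_min_trace hfrontier hIdadm hmin hHC
  exact ⟨s, u, l, fun i => (hu i).1, fun i => by simpa using (hu i).2, hl, hsum⟩

/-- John-type decomposition: if `K ⊂ ℝⁿ` is a compact symmetric convex body containing the
closed unit ball, and the identity minimizes `trace(S)` over all symmetric positive-definite
operators `S` with `⟨x, Sx⟩ ≥ 1` for all `x ∈ ∂K`, then there are contact points
`u₁, …, u_s ∈ ∂K` of norm one and weights `λᵢ > 0` with `Σᵢ λᵢ ⟨uᵢ, θ⟩² = ‖θ‖²` for all `θ`. -/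
theorem john_decomposition_of_min_trace
    (n : ℕ) (K : Set (EuclideanSpace ℝ (Fin n)))
    (hKconv : Convex ℝ K) (hKcomp : IsCompact K) (hKsymm : K = -K)
    (hKint : (0 : EuclideanSpace ℝ (Fin n)) ∈ interior K)
    (hball : closedBall (0 : EuclideanSpace ℝ (Fin n)) 1 ⊆ K)
    (hIdadm : ∀ x ∈ frontier K, 1 ≤ (inner ℝ x x : ℝ))
    (hmin : ∀ S : EuclideanSpace ℝ (Fin n) →ₗ[ℝ] EuclideanSpace ℝ (Fin n),
      LinearMap.IsSymmetric S → (∀ x : EuclideanSpace ℝ (Fin n), x ≠ 0 → 0 < (inner ℝ x (S x) : ℝ)) →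
      (∀ x ∈ frontier K, 1 ≤ (inner ℝ x (S x) : ℝ)) →
      LinearMap.trace ℝ (EuclideanSpace ℝ (Fin n)) LinearMap.id
        ≤ LinearMap.trace ℝ (EuclideanSpace ℝ (Fin n)) S) :
    ∃ (s : ℕ) (u : Fin s → EuclideanSpace ℝ (Fin n)) (l : Fin s → ℝ),
      (∀ i, u i ∈ frontier K) ∧ (∀ i, ‖u i‖ = 1) ∧ (∀ i, 0 < l i) ∧
      (∀ θ : EuclideanSpace ℝ (Fin n),
        ∑ i, l i * (inner ℝ (u i) θ : ℝ) ^ 2 = ‖θ‖ ^ 2) :=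
  john_decomposition_of_min_trace_general n K hKcomp hIdadm hmin
end

section
/- Let K ⊂ ℝⁿ be a symmetric convex body, F = {x : ⟨x,Tx⟩ ≤ 1} ⊆ K an ellipsoid (T symmetric positive definite), and ν a finite measure supported on ∂K ∩ ∂F with ∫ x ⊗ x dν(x) = Id. Then for every symmetric positive definite operator S with ⟨x, Sx⟩ ≥ 1 for all x ∈ ∂K, we have trace(S) ≥ trace(T). In particular, F minimizes M among all ellipsoids contained in K. -/
/-!
Isotropy of `ν` polarizes to `∫ ⟨x,u⟩⟨x,v⟩ dν = ⟨u,v⟩`, and expanding `x` in an orthonormal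
basis then gives `∫ ⟨x,Ax⟩ dν = trace A` for every linear map `A`. Since `ν` lives on `∂F`,
where `⟨x,Tx⟩ = 1`, and on `∂K`, where `⟨x,Sx⟩ ≥ 1`, integrating the two quadratic forms
against `ν` compares the traces.
-/

open MeasureTheory
open scoped InnerProductSpace

section Isotropic

variable {E : Type*} [NormedAddCommGroup E] [InnerProductSpace ℝ E]

theorem real_inner_mul_inner_eq_sq_sub_sq (x u v : E) :
    ⟪x, u⟫_ℝ * ⟪x, v⟫_ℝ = (⟪x, u + v⟫_ℝ ^ 2 - ⟪x, u - v⟫_ℝ ^ 2) / 4 := by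
  rw [inner_add_right, inner_sub_right]
  ring

theorem real_inner_map_self_eq_sum (A : E →ₗ[ℝ] E) {ι : Type*} [Fintype ι]
    (b : OrthonormalBasis ι ℝ E) (x : E) :
    ⟪x, A x⟫_ℝ = ∑ i, ⟪x, b i⟫_ℝ * ⟪x, A (b i)⟫_ℝ := by
  calc ⟪x, A x⟫_ℝ = ⟪x, A (∑ i, ⟪b i, x⟫_ℝ • b i)⟫_ℝ := by rw [b.sum_repr']
    _ = _ := by simp only [map_sum, map_smul, inner_sum, real_inner_smul_right, real_inner_comm x]

variable [MeasurableSpace E] {ν : Measure E}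

/-- The condition `∫ x ⊗ x dν = Id`, tested against every `θ ⊗ θ`. -/
def IsIsotropic (ν : Measure E) : Prop :=
  ∀ θ : E, ∫ x, ⟪x, θ⟫_ℝ ^ 2 ∂ν = ‖θ‖ ^ 2

namespace IsIsotropic

/-- The integral is nonzero for `θ ≠ 0`, so it cannot be the junk value of a
non-integrable function. -/
theorem integrable_inner_sq (hν : IsIsotropic ν) (θ : E) :
    Integrable (fun x => ⟪x, θ⟫_ℝ ^ 2) ν := by
  rcases eq_or_ne θ 0 with rfl | hθ
  · simp
  · by_contra hint
    have := hν θ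
    rw [integral_undef hint] at this
    exact pow_ne_zero 2 (norm_ne_zero_iff.mpr hθ) this.symm

theorem integrable_inner_mul_inner (hν : IsIsotropic ν) (u v : E) :
    Integrable (fun x => ⟪x, u⟫_ℝ * ⟪x, v⟫_ℝ) ν := by
  simp_rw [real_inner_mul_inner_eq_sq_sub_sq]
  exact ((hν.integrable_inner_sq _).sub (hν.integrable_inner_sq _)).div_const 4

theorem integral_inner_mul_inner (hν : IsIsotropic ν) (u v : E) :
    ∫ x, ⟪x, u⟫_ℝ * ⟪x, v⟫_ℝ ∂ν = ⟪u, v⟫_ℝ := by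
  simp_rw [real_inner_mul_inner_eq_sq_sub_sq]
  rw [integral_div, integral_sub (hν.integrable_inner_sq _) (hν.integrable_inner_sq _),
    hν, hν, norm_add_sq_real, norm_sub_sq_real]
  ring

variable [FiniteDimensional ℝ E]

theorem integrable_inner_map_self (hν : IsIsotropic ν) (A : E →ₗ[ℝ] E) :
    Integrable (fun x => ⟪x, A x⟫_ℝ) ν := by
  simp_rw [real_inner_map_self_eq_sum A (stdOrthonormalBasis ℝ E)]
  exact integrable_finsetSum _ fun i _ => hν.integrable_inner_mul_inner _ _

theorem integral_inner_map_self (hν : IsIsotropic ν) (A : E →ₗ[ℝ] E) :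
    ∫ x, ⟪x, A x⟫_ℝ ∂ν = LinearMap.trace ℝ E A := by
  let b := stdOrthonormalBasis ℝ E
  simp_rw [real_inner_map_self_eq_sum A b]
  rw [integral_finsetSum _ fun i _ => hν.integrable_inner_mul_inner _ _,
    LinearMap.trace_eq_sum_inner A b]
  simp only [hν.integral_inner_mul_inner]

end IsIsotropic

end Isotropic

theorem isotropic_measure_implies_min_trace_general
    (n : ℕ) (K : Set (EuclideanSpace ℝ (Fin n)))
    (T : EuclideanSpace ℝ (Fin n) →ₗ[ℝ] EuclideanSpace ℝ (Fin n))
    (F : Set (EuclideanSpace ℝ (Fin n)))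
    (hF : F = {x | (inner ℝ x (T x) : ℝ) ≤ 1})
    (ν : Measure (EuclideanSpace ℝ (Fin n)))
    (hsupp : ν (frontier K ∩ frontier F)ᶜ = 0)
    (hiso : ∀ θ : EuclideanSpace ℝ (Fin n),
      ∫ x, (inner ℝ x θ : ℝ) ^ 2 ∂ν = ‖θ‖ ^ 2)
    (S : EuclideanSpace ℝ (Fin n) →ₗ[ℝ] EuclideanSpace ℝ (Fin n))
    (hSadm : ∀ x ∈ frontier K, 1 ≤ (inner ℝ x (S x) : ℝ)) :
    LinearMap.trace ℝ (EuclideanSpace ℝ (Fin n)) T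
      ≤ LinearMap.trace ℝ (EuclideanSpace ℝ (Fin n)) S := by
  have hν : IsIsotropic ν := hiso
  have hT_frontier : frontier F ⊆ {x | ⟪x, T x⟫_ℝ = 1} := by
    rw [hF]
    exact frontier_le_subset_eq (continuous_id.inner T.continuous_of_finiteDimensional)
      continuous_const
  rw [← hν.integral_inner_map_self T, ← hν.integral_inner_map_self S]
  refine integral_mono_ae (hν.integrable_inner_map_self T) (hν.integrable_inner_map_self S) ?_
  have hae : ∀ᵐ x ∂ν, x ∈ frontier K ∩ frontier F := ae_iff.mpr hsupp
  filter_upwards [hae] with x hx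
  rw [hT_frontier hx.2]
  exact hSadm x hx.1

/-- Sufficiency of an isotropic measure on contact points: if `F = {x : ⟨x,Tx⟩ ≤ 1} ⊆ K`
with `T` symmetric positive definite, and `ν` is a finite measure supported on `∂K ∩ ∂F`
with `∫ ⟨x,θ⟩² dν(x) = ‖θ‖²` for all `θ`, then every symmetric positive definite `S` with
`⟨x, Sx⟩ ≥ 1` on `∂K` satisfies `trace(S) ≥ trace(T)`. -/
theorem isotropic_measure_implies_min_trace
    (n : ℕ) (K : Set (EuclideanSpace ℝ (Fin n)))
    (hKconv : Convex ℝ K) (hKcomp : IsCompact K) (hKsymm : K = -K)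
    (hKint : (0 : EuclideanSpace ℝ (Fin n)) ∈ interior K)
    (T : EuclideanSpace ℝ (Fin n) →ₗ[ℝ] EuclideanSpace ℝ (Fin n))
    (hTsymm : LinearMap.IsSymmetric T)
    (hTpos : ∀ x : EuclideanSpace ℝ (Fin n), x ≠ 0 → 0 < (inner ℝ x (T x) : ℝ))
    (F : Set (EuclideanSpace ℝ (Fin n)))
    (hF : F = {x | (inner ℝ x (T x) : ℝ) ≤ 1}) (hFK : F ⊆ K)
    (ν : Measure (EuclideanSpace ℝ (Fin n))) [IsFiniteMeasure ν]
    (hsupp : ν (frontier K ∩ frontier F)ᶜ = 0)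
    (hiso : ∀ θ : EuclideanSpace ℝ (Fin n),
      ∫ x, (inner ℝ x θ : ℝ) ^ 2 ∂ν = ‖θ‖ ^ 2)
    (S : EuclideanSpace ℝ (Fin n) →ₗ[ℝ] EuclideanSpace ℝ (Fin n))
    (hSsymm : LinearMap.IsSymmetric S)
    (hSpos : ∀ x : EuclideanSpace ℝ (Fin n), x ≠ 0 → 0 < (inner ℝ x (S x) : ℝ))
    (hSadm : ∀ x ∈ frontier K, 1 ≤ (inner ℝ x (S x) : ℝ)) :
    LinearMap.trace ℝ (EuclideanSpace ℝ (Fin n)) T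
      ≤ LinearMap.trace ℝ (EuclideanSpace ℝ (Fin n)) S :=
  isotropic_measure_implies_min_trace_general n K T F hF ν hsupp hiso S hSadm
end

section
/- Let K, T ⊂ ℝⁿ be compact symmetric convex bodies with T ⊄ K. Then there exists an ellipsoid F ⊆ T with F ⊄ K, and linearly independent vectors v₁,...,vₙ such that each vᵢ lies in ∂F ∩ ∂C, where C = conv(K ∪ F). -/
open MeasureTheory Metric Set

noncomputable section

/-- A (nondegenerate, centrally symmetric) ellipsoid in `ℝⁿ`: the image of the closed unit
ball under an invertible linear map. -/
def IsEllipsoid {n : ℕ} (F : Set (EuclideanSpace ℝ (Fin n))) : Prop :=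
  ∃ L : EuclideanSpace ℝ (Fin n) ≃ₗ[ℝ] EuclideanSpace ℝ (Fin n),
    F = L '' closedBall 0 1

/-!
Shrinking a point of `T \ K` towards the origin gives `x ∈ int T \ K`. A thin enough ellipsoid
`F` with long axis `[-x, x]` lies in `T` and contains `x`. Writing `F = A '' closedBall 0 1` with
`A` symmetric, the support function of `F` is `g ↦ ‖A g‖`. A functional `g` separating `x` from
`K` satisfies `⟪g, k⟫ < ‖A g‖` on `K`, and by compactness of `K` so does every functional near it;
these contain a basis `g₁, …, gₙ`. The point of `F` where `⟪gᵢ, ·⟫` is maximal,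
`‖A gᵢ‖⁻¹ • A (A gᵢ)`, is then maximal on `conv (K ∪ F)` too, so it lies on both boundaries.
-/

open Filter Topology Module InnerProductSpace

open scoped RealInnerProductSpace

theorem IsCompact.isOpen_setOf_forall_lt {X Y α : Type*} [TopologicalSpace X]
    [TopologicalSpace Y] [LinearOrder α] [TopologicalSpace α] [OrderClosedTopology α]
    {K : Set Y} (hK : IsCompact K) {f : X → Y → α} (hf : Continuous (Function.uncurry f))
    {φ : X → α} (hφ : Continuous φ) : IsOpen {x | ∀ y ∈ K, f x y < φ x} := by
  refine isOpen_iff_mem_nhds.2 fun x₀ hx₀ => hK.eventually_forall_of_forall_eventually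
    fun y hy => ?_
  exact (isOpen_lt hf (hφ.comp continuous_fst)).mem_nhds (hx₀ y hy)

theorem IsMaxOn.convexHull {𝕜 E : Type*} [Field 𝕜] [LinearOrder 𝕜] [IsStrictOrderedRing 𝕜]
    [AddCommGroup E] [Module 𝕜 E] {f : E →ₗ[𝕜] 𝕜} {s : Set E} {x : E} (h : IsMaxOn f s x) :
    IsMaxOn f (convexHull 𝕜 s) x := fun y hy => by
  obtain ⟨z, hz, hyz⟩ := (f.convexOn convex_univ).exists_ge_of_mem_convexHull (subset_univ s) hy
  exact hyz.trans (h hz)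

theorem mem_frontier_of_isMaxOn {E : Type*} [NormedAddCommGroup E] [NormedSpace ℝ E]
    {f : E →L[ℝ] ℝ} (hf : f ≠ 0) {s : Set E} {x : E} (hx : x ∈ s) (h : IsMaxOn f s x) :
    x ∈ frontier s :=
  ⟨subset_closure hx, fun hint =>
    hf ((h.isLocalMax (mem_interior_iff_mem_nhds.1 hint)).hasFDerivAt_eq_zero f.hasFDerivAt)⟩

theorem IsOpen.exists_linearIndependent_fin {E : Type*} [NormedAddCommGroup E]
    [NormedSpace ℝ E] [FiniteDimensional ℝ E] {n : ℕ} (hn : finrank ℝ E = n) {U : Set E}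
    (hU : IsOpen U) (hne : U.Nonempty) :
    ∃ v : Fin n → E, LinearIndependent ℝ v ∧ ∀ i, v i ∈ U := by
  have hspan : Submodule.span ℝ U = ⊤ := Submodule.eq_top_of_nonempty_interior' _
    (hne.mono (interior_maximal Submodule.subset_span hU))
  obtain ⟨b, hbU, hbspan, hb⟩ := exists_linearIndependent ℝ U
  rw [hspan] at hbspan
  let e := (Basis.mk hb (by rw [Subtype.range_coe, hbspan])).indexEquiv
    (finBasisOfFinrankEq ℝ E hn)
  exact ⟨fun i => e.symm i, hb.comp _ e.symm.injective, fun i => hbU (e.symm i).2⟩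

theorem isCompact_segment {E : Type*} [AddCommGroup E] [Module ℝ E] [TopologicalSpace E]
    [IsTopologicalAddGroup E] [ContinuousSMul ℝ E] (x y : E) : IsCompact (segment ℝ x y) := by
  rw [← convexHull_pair]
  exact (toFinite {x, y}).isCompact_convexHull ℝ

theorem smul_mem_segment_neg {E : Type*} [AddCommGroup E] [Module ℝ E] {t : ℝ} (ht : |t| ≤ 1)
    (x : E) : t • x ∈ segment ℝ (-x) x := by
  obtain ⟨h₁, h₂⟩ := abs_le.1 ht
  refine ⟨(1 - t) / 2, (1 + t) / 2, by linarith, by linarith, by ring, ?_⟩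
  match_scalars; ring

theorem exists_mem_interior_notMem {E : Type*} [NormedAddCommGroup E] [NormedSpace ℝ E]
    {K T : Set E} (hT : Convex ℝ T) (hT0 : (0 : E) ∈ interior T) (hK : IsClosed K)
    (hTK : ¬ T ⊆ K) : ∃ x ∈ interior T, x ∉ K := by
  obtain ⟨y, hyT, hyK⟩ := not_subset.1 hTK
  have hlim : Tendsto (fun t : ℝ => y + t • (0 - y)) (𝓝[>] 0) (𝓝 y) :=
    tendsto_nhdsWithin_of_tendsto_nhds <| Continuous.tendsto' (by fun_prop) _ _ (by simp)
  have hint : ∀ᶠ t in 𝓝[>] (0 : ℝ), y + t • (0 - y) ∈ interior T :=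
    eventually_of_mem (Ioc_mem_nhdsGT one_pos) fun t ht =>
      hT.add_smul_sub_mem_interior hyT hT0 ht
  obtain ⟨t, ht, htK⟩ := (hint.and (hlim.eventually (hK.isOpen_compl.mem_nhds hyK))).exists
  exact ⟨_, ht, htK⟩

section Ellipsoid

variable {E : Type*} [NormedAddCommGroup E] [InnerProductSpace ℝ E]

theorem LinearMap.IsSymmetric.inner_le_norm_of_mem_image_closedBall {A : E →ₗ[ℝ] E}
    (hA : A.IsSymmetric) (g : E) {y : E} (hy : y ∈ A '' closedBall 0 1) : ⟪g, y⟫ ≤ ‖A g‖ := by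
  obtain ⟨z, hz, rfl⟩ := hy
  rw [mem_closedBall_zero_iff] at hz
  calc ⟪g, A z⟫ = ⟪A g, z⟫ := (hA g z).symm
    _ ≤ ‖A g‖ * ‖z‖ := real_inner_le_norm _ _
    _ ≤ ‖A g‖ := mul_le_of_le_one_right (norm_nonneg _) hz

theorem LinearMap.IsSymmetric.inner_inv_norm_smul_apply_apply {A : E →ₗ[ℝ] E}
    (hA : A.IsSymmetric) {g : E} (hAg : A g ≠ 0) : ⟪g, ‖A g‖⁻¹ • A (A g)⟫ = ‖A g‖ := by
  rw [real_inner_smul_right, ← hA, real_inner_self_eq_norm_sq, sq,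
    inv_mul_cancel_left₀ (norm_ne_zero_iff.2 hAg)]

theorem inv_norm_smul_apply_apply_mem_image_closedBall (A : E →ₗ[ℝ] E) (g : E) :
    ‖A g‖⁻¹ • A (A g) ∈ A '' closedBall 0 1 :=
  ⟨‖A g‖⁻¹ • A g, by simpa [norm_smul] using inv_mul_le_one_of_le₀ le_rfl (norm_nonneg (A g)),
    by simp⟩

theorem LinearMap.IsSymmetric.mem_frontier_inter_frontier_convexHull {A : E →ₗ[ℝ] E}
    (hA : A.IsSymmetric) {K : Set E} {g : E} (hAg : A g ≠ 0) (hK : ∀ k ∈ K, ⟪g, k⟫ ≤ ‖A g‖) :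
    ‖A g‖⁻¹ • A (A g) ∈
      frontier (A '' closedBall 0 1) ∩ frontier (convexHull ℝ (K ∪ A '' closedBall 0 1)) := by
  set F := A '' closedBall 0 1
  have hwF := inv_norm_smul_apply_apply_mem_image_closedBall A g
  have hg : innerSL ℝ g ≠ 0 := by
    rw [← norm_ne_zero_iff, innerSL_apply_norm, norm_ne_zero_iff]
    rintro rfl
    exact hAg (map_zero A)
  have hmax : IsMaxOn (innerSL ℝ g) (K ∪ F) (‖A g‖⁻¹ • A (A g)) := by
    rintro y (hy | hy) <;>
      simp only [innerSL_apply_apply, hA.inner_inv_norm_smul_apply_apply hAg]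
    · exact hK y hy
    · exact hA.inner_le_norm_of_mem_image_closedBall g hy
  exact ⟨mem_frontier_of_isMaxOn hg hwF (hmax.on_subset subset_union_right),
    mem_frontier_of_isMaxOn hg (subset_convexHull ℝ _ (subset_union_right hwF))
      (IsMaxOn.convexHull (f := (innerSL ℝ g).toLinearMap) hmax)⟩

end Ellipsoid

section ThinEllipsoid

variable {E : Type*} [NormedAddCommGroup E] [InnerProductSpace ℝ E]

-- For a unit vector `u`, the ellipsoid has semi-axis `a` along `u` and `ε` orthogonally to it.
def thinEllipsoidMap (u : E) (a ε : ℝ) : E →ₗ[ℝ] E :=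
  ε • LinearMap.id + (a - ε) • (rankOne ℝ u u : E →L[ℝ] E).toLinearMap

variable {u : E} {a ε : ℝ}

theorem thinEllipsoidMap_apply (u : E) (a ε : ℝ) (z : E) :
    thinEllipsoidMap u a ε z = ε • z + ((a - ε) * ⟪u, z⟫) • u := by
  simp [thinEllipsoidMap, smul_smul]

theorem isSymmetric_thinEllipsoidMap (u : E) (a ε : ℝ) : (thinEllipsoidMap u a ε).IsSymmetric := by
  intro y z
  simp only [thinEllipsoidMap_apply, inner_add_left, inner_add_right, real_inner_smul_left,
    real_inner_smul_right, real_inner_comm y u]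
  ring

theorem thinEllipsoidMap_self (hu : ‖u‖ = 1) : thinEllipsoidMap u a ε u = a • u := by
  rw [thinEllipsoidMap_apply, real_inner_self_eq_norm_sq, hu]
  match_scalars
  ring

theorem injective_thinEllipsoidMap (hu : ‖u‖ = 1) (ha : a ≠ 0) (hε : ε ≠ 0) :
    Function.Injective (thinEllipsoidMap u a ε) := by
  refine (injective_iff_map_eq_zero _).2 fun z hz => ?_
  have hinner : ⟪u, z⟫ = 0 := by
    have := congrArg (⟪u, ·⟫) hz
    simp only [thinEllipsoidMap_apply, inner_add_right, real_inner_smul_right,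
      real_inner_self_eq_norm_sq, hu, inner_zero_right] at this
    exact (mul_eq_zero.1 (by linear_combination this)).resolve_left ha
  rw [thinEllipsoidMap_apply, hinner, mul_zero, zero_smul, add_zero] at hz
  exact (smul_eq_zero.1 hz).resolve_left hε

theorem dist_thinEllipsoidMap_le (hu : ‖u‖ = 1) (hε : 0 ≤ ε) {z : E} (hz : ‖z‖ ≤ 1) :
    dist (thinEllipsoidMap u a ε z) (⟪u, z⟫ • a • u) ≤ ε := by
  have hdecomp : thinEllipsoidMap u a ε z - ⟪u, z⟫ • a • u = ε • (z - ⟪u, z⟫ • u) := by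
    rw [thinEllipsoidMap_apply]
    match_scalars <;> ring
  have hperp : ‖z - ⟪u, z⟫ • u‖ ≤ 1 := by
    have : ‖z - ⟪u, z⟫ • u‖ ^ 2 = ‖z‖ ^ 2 - ⟪u, z⟫ ^ 2 := by
      rw [norm_sub_sq_real, real_inner_smul_right, norm_smul, hu, real_inner_comm, Real.norm_eq_abs]
      ring_nf; rw [sq_abs]; ring
    nlinarith [norm_nonneg (z - ⟪u, z⟫ • u), norm_nonneg z]
  rw [dist_eq_norm, hdecomp, norm_smul, Real.norm_of_nonneg hε]
  exact mul_le_of_le_one_right hε hperp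

theorem thinEllipsoidMap_image_closedBall_subset (hu : ‖u‖ = 1) (hε : 0 ≤ ε) :
    thinEllipsoidMap u a ε '' closedBall 0 1 ⊆ cthickening ε (segment ℝ (-(a • u)) (a • u)) := by
  rintro _ ⟨z, hz, rfl⟩
  rw [mem_closedBall_zero_iff] at hz
  have ht : |⟪u, z⟫| ≤ 1 := (abs_real_inner_le_norm u z).trans (by rw [hu, one_mul]; exact hz)
  exact mem_cthickening_of_dist_le _ _ _ _ (smul_mem_segment_neg ht _)
    (dist_thinEllipsoidMap_le hu hε hz)

end ThinEllipsoid

theorem exists_linearIndependent_mem_frontier_inter_frontier_convexHull {E : Type*}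
    [NormedAddCommGroup E] [InnerProductSpace ℝ E] [FiniteDimensional ℝ E] {n : ℕ}
    (hn : finrank ℝ E = n) {K : Set E} (hKconv : Convex ℝ K) (hKcomp : IsCompact K)
    {A : E →ₗ[ℝ] E} (hA : A.IsSymmetric) (hAinj : Function.Injective A) {x : E}
    (hxF : x ∈ A '' closedBall 0 1) (hxK : x ∉ K) :
    ∃ v : Fin n → E, LinearIndependent ℝ v ∧
      ∀ i, v i ∈ frontier (A '' closedBall 0 1) ∩
        frontier (convexHull ℝ (K ∪ A '' closedBall 0 1)) := by
  obtain ⟨f, c, hfK, hfx⟩ := geometric_hahn_banach_closed_point hKconv hKcomp.isClosed hxK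
  set U : Set E := {g | ∀ k ∈ K, ⟪g, k⟫ < ‖A g‖}
  have hU : IsOpen U := hKcomp.isOpen_setOf_forall_lt continuous_inner
    (continuous_norm.comp A.continuous_of_finiteDimensional)
  have hθ : (toDual ℝ E).symm f ∈ U := fun k hk => by
    have hfA := hA.inner_le_norm_of_mem_image_closedBall ((toDual ℝ E).symm f) hxF
    rw [toDual_symm_apply] at hfA ⊢
    exact (hfK k hk).trans (hfx.trans_le hfA)
  obtain ⟨g, hg, hgU⟩ := hU.exists_linearIndependent_fin hn ⟨_, hθ⟩
  have hAg : ∀ i, A (g i) ≠ 0 := fun i => (map_ne_zero_iff A hAinj).2 (hg.ne_zero i)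
  refine ⟨fun i => ‖A (g i)‖⁻¹ • A (A (g i)), ?_, fun i =>
    hA.mem_frontier_inter_frontier_convexHull (hAg i) fun k hk => (hgU i k hk).le⟩
  exact (hg.map' (A ∘ₗ A) (LinearMap.ker_eq_bot_of_injective (hAinj.comp hAinj))).units_smul
    fun i => Units.mk0 _ (inv_ne_zero (norm_ne_zero_iff.2 (hAg i)))

theorem exists_ellipsoid_with_independent_contact_points_general
    (n : ℕ) (K T : Set (EuclideanSpace ℝ (Fin n)))
    (hKconv : Convex ℝ K) (hKcomp : IsCompact K)
    (hKint : (0 : EuclideanSpace ℝ (Fin n)) ∈ interior K)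
    (hTconv : Convex ℝ T) (hTsymm : T = -T)
    (hTint : (0 : EuclideanSpace ℝ (Fin n)) ∈ interior T)
    (hTK : ¬ T ⊆ K) :
    ∃ F : Set (EuclideanSpace ℝ (Fin n)), IsEllipsoid F ∧ F ⊆ T ∧ ¬ F ⊆ K ∧
      ∃ v : Fin n → EuclideanSpace ℝ (Fin n), LinearIndependent ℝ v ∧
        ∀ i, v i ∈ frontier F ∩ frontier (convexHull ℝ (K ∪ F)) := by
  obtain ⟨x, hxT, hxK⟩ := exists_mem_interior_notMem hTconv hTint hKcomp.isClosed hTK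
  have hx0 : x ≠ 0 := fun h => hxK (h ▸ interior_subset hKint)
  have hnegxT : -x ∈ interior T := by
    rw [hTsymm, show -T = Homeomorph.neg _ ⁻¹' T from rfl, ← Homeomorph.preimage_interior]
    simpa using hxT
  obtain ⟨ε, hε, hεT⟩ := (isCompact_segment (-x) x).exists_cthickening_subset_open
    isOpen_interior (hTconv.interior.segment_subset hnegxT hxT)
  set u := ‖x‖⁻¹ • x
  have hu : ‖u‖ = 1 := norm_smul_inv_norm hx0
  have hux : ‖x‖ • u = x := by simp [u, smul_smul, norm_ne_zero_iff.2 hx0]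
  have hinj := injective_thinEllipsoidMap hu (norm_ne_zero_iff.2 hx0) hε.ne'
  set A := thinEllipsoidMap u ‖x‖ ε
  have hFT : A '' closedBall 0 1 ⊆ T := by
    have := thinEllipsoidMap_image_closedBall_subset (a := ‖x‖) hu hε.le
    rw [hux] at this
    exact this.trans (hεT.trans interior_subset)
  have hxF : x ∈ A '' closedBall 0 1 :=
    ⟨u, by simp [hu], by rw [thinEllipsoidMap_self hu, hux]⟩
  obtain ⟨v, hv, hvF⟩ := exists_linearIndependent_mem_frontier_inter_frontier_convexHull
    finrank_euclideanSpace_fin hKconv hKcomp (isSymmetric_thinEllipsoidMap _ _ _) hinj hxF hxK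
  exact ⟨_, ⟨.ofInjectiveEndo A hinj, rfl⟩, hFT, fun h => hxK (h hxF), v, hv, hvF⟩

/-- If `K, T ⊂ ℝⁿ` are compact symmetric convex bodies with `T ⊄ K`, there is an ellipsoid
`F ⊆ T` with `F ⊄ K` and linearly independent `v₁, …, vₙ` each lying in
`∂F ∩ ∂(conv(K ∪ F))`. -/
theorem exists_ellipsoid_with_independent_contact_points
    (n : ℕ) (K T : Set (EuclideanSpace ℝ (Fin n)))
    (hKconv : Convex ℝ K) (hKcomp : IsCompact K) (hKsymm : K = -K)
    (hKint : (0 : EuclideanSpace ℝ (Fin n)) ∈ interior K)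
    (hTconv : Convex ℝ T) (hTcomp : IsCompact T) (hTsymm : T = -T)
    (hTint : (0 : EuclideanSpace ℝ (Fin n)) ∈ interior T)
    (hTK : ¬ T ⊆ K) :
    ∃ F : Set (EuclideanSpace ℝ (Fin n)), IsEllipsoid F ∧ F ⊆ T ∧ ¬ F ⊆ K ∧
      ∃ v : Fin n → EuclideanSpace ℝ (Fin n), LinearIndependent ℝ v ∧
        ∀ i, v i ∈ frontier F ∩ frontier (convexHull ℝ (K ∪ F)) :=
  exists_ellipsoid_with_independent_contact_points_general n K T hKconv hKcomp hKint hTconv hTsymm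
    hTint hTK

end
end

section
/- For every invertible linear map T : ℝⁿ → ℝⁿ, every symmetric convex body K, and every ellipsoid E: u_{TK}(TE) = T(u_K(E)), where u_K(E) is the unique ellipsoid contained in K minimizing M_E. Moreover u_K(tE) = u_K(E) for every t ≠ 0. -/
/-!
Write `E = L(B)` and `F = A(B)` with `B` the unit ball. The gauge of `F` is `x ↦ ‖A⁻¹x‖`, so
`M_E(F)² = ∫ ‖A⁻¹Lx‖² dσ(x)` with `σ` the uniform probability on the unit sphere; this does not
depend on the choice of `L`, because two choices differ by a linear map fixing `B`, i.e. an
isometry, and `σ` is rotation invariant. Replacing `(E, F)` by `(TE, TF)` replaces `(L, A)` by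
`(TL, TA)` and leaves the integrand unchanged, while replacing `E` by `tE` multiplies `M_E` by
`|t|`. So `T` carries the minimization problem for `(K, E)` onto the one for `(TK, TE)`, and
scaling `E` only rescales the objective; in both cases the unique minimizer follows.
-/

open MeasureTheory Metric Set

noncomputable section
attribute [local instance] Classical.propDecidable

variable {n : ℕ}

/-- The uniform (rotation-invariant) probability measure on the unit sphere of `ℝⁿ`,
viewed as a measure on `ℝⁿ`. -/
def sphereProb (n : ℕ) : Measure (EuclideanSpace ℝ (Fin n)) :=
  letI σ : Measure (EuclideanSpace ℝ (Fin n)) :=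
    ((volume : Measure (EuclideanSpace ℝ (Fin n))).toSphere).map Subtype.val
  (σ Set.univ)⁻¹ • σ

/-- The invariant probability measure `μ_E` on the boundary of the ellipsoid
`E = L(closedBall 0 1)`: the pushforward of the uniform sphere measure by `L`.
(It does not depend on the choice of `L`.) -/
def ellMeasure {n : ℕ} (E : Set (EuclideanSpace ℝ (Fin n))) :
    Measure (EuclideanSpace ℝ (Fin n)) :=
  if h : IsEllipsoid E then (sphereProb n).map h.choose else 0

/-- `M_E(F) = (∫_{∂E} ‖x‖_F² dμ_E(x))^{1/2}`, where `‖·‖_F` is the Minkowski gauge of `F`. -/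
def Mfun {n : ℕ} (E F : Set (EuclideanSpace ℝ (Fin n))) : ℝ :=
  Real.sqrt (∫ x, (gauge F x) ^ 2 ∂(ellMeasure E))

/-- `J_K(E) = inf { M_E(F) : F an ellipsoid contained in K }`. -/
def Jfun {n : ℕ} (K E : Set (EuclideanSpace ℝ (Fin n))) : ℝ :=
  sInf { r | ∃ F, IsEllipsoid F ∧ F ⊆ K ∧ r = Mfun E F }


open Pointwise

/-- `F` is the unique ellipsoid contained in `K` minimizing `M_E`, i.e. `F = u_K(E)`. -/
def IsUniqueMin {n : ℕ} (K E F : Set (EuclideanSpace ℝ (Fin n))) : Prop :=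
  IsEllipsoid F ∧ F ⊆ K ∧
    (∀ G, IsEllipsoid G → G ⊆ K → Mfun E F ≤ Mfun E G) ∧
    (∀ G, IsEllipsoid G → G ⊆ K → Mfun E G = Mfun E F → G = F)

theorem LinearEquiv.image_image_trans {R M₁ M₂ M₃ : Type*} [Semiring R] [AddCommMonoid M₁]
    [AddCommMonoid M₂] [AddCommMonoid M₃] [Module R M₁] [Module R M₂] [Module R M₃]
    (e₁ : M₁ ≃ₗ[R] M₂) (e₂ : M₂ ≃ₗ[R] M₃) (s : Set M₁) : e₂ '' (e₁ '' s) = e₁.trans e₂ '' s := by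
  rw [image_image]
  rfl

section Gauge

variable {E F : Type*}

theorem gauge_image_linearEquiv [AddCommGroup E] [Module ℝ E] [AddCommGroup F] [Module ℝ F]
    (L : E ≃ₗ[ℝ] F) (s : Set E) (x : E) : gauge (L '' s) (L x) = gauge s x := by
  simp only [gauge_def', ← L.map_smul, L.injective.mem_set_image]

variable [SeminormedAddCommGroup E] [NormedSpace ℝ E]

theorem gauge_image_closedBall [AddCommGroup F] [Module ℝ F] (A : E ≃ₗ[ℝ] F) (x : F) :
    gauge (A '' closedBall 0 1) x = ‖A.symm x‖ := by
  rw [← A.apply_symm_apply x, gauge_image_linearEquiv, gauge_closedBall zero_le_one, div_one,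
    A.symm_apply_apply]

theorem LinearEquiv.norm_map_of_image_closedBall_eq (M : E ≃ₗ[ℝ] E)
    (hM : M '' closedBall 0 1 = closedBall 0 1) (x : E) : ‖M x‖ = ‖x‖ := by
  have h := gauge_image_closedBall M (M x)
  rwa [hM, gauge_closedBall zero_le_one, div_one, M.symm_apply_apply] at h

end Gauge

section Sphere

variable {E : Type*} [NormedAddCommGroup E] [InnerProductSpace ℝ E] [FiniteDimensional ℝ E]
  [MeasurableSpace E] [BorelSpace E]

theorem map_toSphere_map_val_linearIsometryEquiv (R : E ≃ₗᵢ[ℝ] E) :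
    ((volume : Measure E).toSphere.map Subtype.val).map R =
      (volume : Measure E).toSphere.map Subtype.val := by
  ext A hA
  have hR : Measurable R := R.continuous.measurable
  have hsphere : sphere (0 : E) 1 ∩ R ⁻¹' A = R ⁻¹' (sphere 0 1 ∩ A) := by
    ext y; simp
  have hIoo : Ioo (0 : ℝ) 1 • R ⁻¹' (sphere 0 1 ∩ A) =
      R ⁻¹' (Ioo (0 : ℝ) 1 • (sphere 0 1 ∩ A)) := by
    rw [← R.symm_symm, ← R.symm.image_eq_preimage_symm, ← R.symm.image_eq_preimage_symm,
      ← image2_smul, ← image2_smul,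
      image_image2_distrib_right fun a b => R.symm.map_smul a b]
  rw [Measure.map_apply hR hA, Measure.map_apply measurable_subtype_coe (hR hA),
    Measure.map_apply measurable_subtype_coe hA,
    Measure.toSphere_apply' _ (measurable_subtype_coe (hR hA)),
    Measure.toSphere_apply' _ (measurable_subtype_coe hA),
    Subtype.image_preimage_coe, Subtype.image_preimage_coe, hsphere, hIoo,
    R.measurePreserving.measure_preimage_emb R.toHomeomorph.measurableEmbedding]

end Sphere

theorem sphereProb_map_linearIsometryEquiv
    (R : EuclideanSpace ℝ (Fin n) ≃ₗᵢ[ℝ] EuclideanSpace ℝ (Fin n)) :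
    (sphereProb n).map R = sphereProb n := by
  rw [sphereProb, Measure.map_smul, map_toSphere_map_val_linearIsometryEquiv]

theorem IsEllipsoid.image (T : EuclideanSpace ℝ (Fin n) ≃ₗ[ℝ] EuclideanSpace ℝ (Fin n))
    {E : Set (EuclideanSpace ℝ (Fin n))} (hE : IsEllipsoid E) : IsEllipsoid (T '' E) := by
  obtain ⟨L, rfl⟩ := hE
  exact ⟨L.trans T, L.image_image_trans T _⟩

theorem isEllipsoid_image_iff (T : EuclideanSpace ℝ (Fin n) ≃ₗ[ℝ] EuclideanSpace ℝ (Fin n))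
    {E : Set (EuclideanSpace ℝ (Fin n))} : IsEllipsoid (T '' E) ↔ IsEllipsoid E := by
  refine ⟨fun h => ?_, IsEllipsoid.image T⟩
  simpa [image_image] using h.image T.symm

theorem ellMeasure_image_closedBall
    (L : EuclideanSpace ℝ (Fin n) ≃ₗ[ℝ] EuclideanSpace ℝ (Fin n)) :
    ellMeasure (L '' closedBall 0 1) = (sphereProb n).map L := by
  have hE : IsEllipsoid (L '' closedBall 0 1) := ⟨L, rfl⟩
  set L₀ := hE.choose
  have hM : (L₀.trans L.symm) '' closedBall 0 1 = closedBall 0 1 := by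
    rw [← L₀.image_image_trans, ← hE.choose_spec, image_image]
    simp
  let R : EuclideanSpace ℝ (Fin n) ≃ₗᵢ[ℝ] EuclideanSpace ℝ (Fin n) :=
    ⟨L₀.trans L.symm, (L₀.trans L.symm).norm_map_of_image_closedBall_eq hM⟩
  have hL₀ : ⇑L₀ = L ∘ R := by
    ext1 x
    simp [R]
  rw [ellMeasure, dif_pos hE, hL₀, ← Measure.map_map (g := L)
    L.toContinuousLinearEquiv.continuous.measurable R.continuous.measurable,
    sphereProb_map_linearIsometryEquiv]

theorem Mfun_image_closedBall (L A : EuclideanSpace ℝ (Fin n) ≃ₗ[ℝ] EuclideanSpace ℝ (Fin n)) :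
    Mfun (L '' closedBall 0 1) (A '' closedBall 0 1) =
      √(∫ x, ‖A.symm (L x)‖ ^ 2 ∂sphereProb n) := by
  simp only [Mfun, ellMeasure_image_closedBall, gauge_image_closedBall]
  rw [integral_map (φ := L) (f := fun x => ‖A.symm x‖ ^ 2)
    L.toContinuousLinearEquiv.continuous.aemeasurable
    (A.symm.toContinuousLinearEquiv.continuous.norm.pow 2).aestronglyMeasurable]

theorem Mfun_image (T : EuclideanSpace ℝ (Fin n) ≃ₗ[ℝ] EuclideanSpace ℝ (Fin n))
    {E F : Set (EuclideanSpace ℝ (Fin n))} (hE : IsEllipsoid E) (hF : IsEllipsoid F) :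
    Mfun (T '' E) (T '' F) = Mfun E F := by
  obtain ⟨L, rfl⟩ := hE
  obtain ⟨A, rfl⟩ := hF
  simp [LinearEquiv.image_image_trans, Mfun_image_closedBall]

theorem Mfun_smul {t : ℝ} (ht : t ≠ 0) {E F : Set (EuclideanSpace ℝ (Fin n))}
    (hE : IsEllipsoid E) (hF : IsEllipsoid F) : Mfun (t • E) F = |t| * Mfun E F := by
  obtain ⟨L, rfl⟩ := hE
  obtain ⟨A, rfl⟩ := hF
  have hsmul : t • (L '' closedBall 0 1) =
      L.trans (LinearEquiv.smulOfNeZero ℝ _ t ht) '' closedBall 0 1 := by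
    rw [← L.image_image_trans, ← image_smul]
    rfl
  simp only [hsmul, Mfun_image_closedBall, LinearEquiv.trans_apply,
    LinearEquiv.smulOfNeZero_apply, map_smul, norm_smul, mul_pow, Real.norm_eq_abs, sq_abs]
  rw [integral_const_mul, Real.sqrt_mul (sq_nonneg t), Real.sqrt_sq_eq_abs]

theorem IsUniqueMin.image (T : EuclideanSpace ℝ (Fin n) ≃ₗ[ℝ] EuclideanSpace ℝ (Fin n))
    {K E F : Set (EuclideanSpace ℝ (Fin n))} (hE : IsEllipsoid E) (h : IsUniqueMin K E F) :
    IsUniqueMin (T '' K) (T '' E) (T '' F) := by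
  obtain ⟨hF, hFK, hmin, huniq⟩ := h
  refine ⟨hF.image T, image_mono hFK, fun G hG hGK => ?_, fun G hG hGK hGF => ?_⟩
  all_goals
    obtain ⟨G, hG'K, rfl⟩ := subset_image_iff.1 hGK
    rw [isEllipsoid_image_iff] at hG
  · rw [Mfun_image T hE hF, Mfun_image T hE hG]
    exact hmin G hG hG'K
  · rw [Mfun_image T hE hG, Mfun_image T hE hF] at hGF
    rw [huniq G hG hG'K hGF]

theorem isUniqueMin_iff_of_Mfun_eq_mul {K E E' F : Set (EuclideanSpace ℝ (Fin n))} {c : ℝ}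
    (hc : 0 < c) (hM : ∀ G, IsEllipsoid G → Mfun E' G = c * Mfun E G) :
    IsUniqueMin K E' F ↔ IsUniqueMin K E F := by
  refine and_congr_right fun hF => and_congr_right fun _ => and_congr ?_ ?_
  · refine forall₃_congr fun G hG _ => ?_
    rw [hM F hF, hM G hG, mul_le_mul_iff_right₀ hc]
  · refine forall₃_congr fun G hG _ => ?_
    rw [hM F hF, hM G hG, mul_right_inj' hc.ne']

theorem isUniqueMin_smul_iff {t : ℝ} (ht : t ≠ 0) {K E F : Set (EuclideanSpace ℝ (Fin n))}
    (hE : IsEllipsoid E) : IsUniqueMin K (t • E) F ↔ IsUniqueMin K E F :=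
  isUniqueMin_iff_of_Mfun_eq_mul (abs_pos.2 ht) fun _ hG => Mfun_smul ht hE hG

theorem uMap_equivariant_and_scale_invariant_general
    (n : ℕ) (K : Set (EuclideanSpace ℝ (Fin n)))
    (E : Set (EuclideanSpace ℝ (Fin n))) (hE : IsEllipsoid E)
    (T : EuclideanSpace ℝ (Fin n) ≃ₗ[ℝ] EuclideanSpace ℝ (Fin n))
    (t : ℝ) (ht : t ≠ 0) :
    (∀ F, IsUniqueMin K E F → IsUniqueMin (T '' K) (T '' E) (T '' F)) ∧
    (∀ F, IsUniqueMin K E F ↔ IsUniqueMin K (t • E) F) :=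
  ⟨fun _ => IsUniqueMin.image T hE, fun _ => (isUniqueMin_smul_iff ht hE).symm⟩

/-- Equivariance and scale invariance of the map `u_K`: for every invertible linear `T`,
`u_{TK}(TE) = T(u_K(E))`, and `u_K(tE) = u_K(E)` for every `t ≠ 0`. -/
theorem uMap_equivariant_and_scale_invariant
    (n : ℕ) (K : Set (EuclideanSpace ℝ (Fin n)))
    (hKconv : Convex ℝ K) (hKcomp : IsCompact K) (hKsymm : K = -K)
    (hKint : (0 : EuclideanSpace ℝ (Fin n)) ∈ interior K)
    (E : Set (EuclideanSpace ℝ (Fin n))) (hE : IsEllipsoid E)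
    (T : EuclideanSpace ℝ (Fin n) ≃ₗ[ℝ] EuclideanSpace ℝ (Fin n))
    (t : ℝ) (ht : t ≠ 0) :
    (∀ F, IsUniqueMin K E F → IsUniqueMin (T '' K) (T '' E) (T '' F)) ∧
    (∀ F, IsUniqueMin K E F ↔ IsUniqueMin K (t • E) F) :=
  uMap_equivariant_and_scale_invariant_general n K E hE T t ht
end
end

section
/- Let K ⊂ ℝⁿ be a symmetric convex body with Löwner-John ellipsoid (maximal volume inscribed ellipsoid) equal to the unit ball B. Then for every ellipsoid F ⊆ K, M*(F) ≤ 1, where M*(F) = ∫_{S^{n-1}} ‖x‖_{F°} dμ(x) is computed via the polar body F° = {y : ⟨x,y⟩ ≤ 1 for all x ∈ F} (using M*² (F) = ∫ ‖x‖²_{F°} dμ), with equality for F = B. -/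
open MeasureTheory Metric Set

noncomputable section

/-!
Write `F = T B`. The polar of `F` is `{y | ‖T* y‖ ≤ 1}`, so `‖x‖_{F°} = ‖T* x‖`. Rotation
invariance makes `μ` isotropic, `∫ ⟪v, x⟫² dμ = ‖v‖² / n`, hence `M*(F)² = tr (T T*) / n`.
For `t ∈ (0, 1)` put `Q_t = (1 - t) I + t T T*`. Every point of `Q_t^{1/2} B` has the form
`(1 - t) u + T (t T* u)` with `(1 - t) ‖u‖² + t ‖T* u‖² ≤ 1`, so it lies in the convex hull of
`B ∪ T B ⊆ K`; maximality of `B` then gives `det Q_t ≤ 1 = det Q_0`, and differentiating at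
`t = 0` yields `tr (T T*) ≤ n`.
-/

open scoped Matrix

section Convex

variable {E F : Type*} [NormedAddCommGroup E] [NormedSpace ℝ E]
  [NormedAddCommGroup F] [NormedSpace ℝ F]

theorem Convex.smul_add_smul_mem_of_zero_mem {K : Set E} (hK : Convex ℝ K) (h0 : (0 : E) ∈ K)
    {x y : E} (hx : x ∈ K) (hy : y ∈ K) {a b : ℝ} (ha : 0 ≤ a) (hb : 0 ≤ b) (hab : a + b ≤ 1) :
    a • x + b • y ∈ K := by
  have := hK.sum_mem (t := Finset.univ) (w := ![a, b, 1 - a - b]) (z := ![x, y, 0])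
    (fun i _ => by fin_cases i <;> simp [ha, hb]; linarith)
    (by simp [Fin.sum_univ_three]) (fun i _ => by fin_cases i <;> simpa)
  simpa [Fin.sum_univ_three] using this

theorem norm_smul_inv_norm_smul (x : E) : ‖x‖ • (‖x‖⁻¹ • x) = x := by
  rcases eq_or_ne x 0 with rfl | hx
  · simp
  · exact smul_inv_smul₀ (norm_ne_zero_iff.2 hx) x

theorem inv_norm_smul_mem_closedBall (x : E) : ‖x‖⁻¹ • x ∈ closedBall (0 : E) 1 := by
  rw [mem_closedBall_zero_iff, norm_smul, norm_inv, norm_norm]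
  exact inv_mul_le_one

theorem Convex.add_map_mem_of_norm_add_norm_le_one {K : Set E} (hK : Convex ℝ K)
    (hB : closedBall (0 : E) 1 ⊆ K) {T : F →L[ℝ] E} (hT : T '' closedBall 0 1 ⊆ K)
    {u : E} {w : F} (h : ‖u‖ + ‖w‖ ≤ 1) : u + T w ∈ K := by
  have := hK.smul_add_smul_mem_of_zero_mem (hB (mem_closedBall_self zero_le_one))
    (hB (inv_norm_smul_mem_closedBall u))
    (hT (mem_image_of_mem T (inv_norm_smul_mem_closedBall w))) (norm_nonneg u) (norm_nonneg w) h
  rwa [← map_smul, norm_smul_inv_norm_smul, norm_smul_inv_norm_smul] at this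

end Convex

section Interpolation

variable {E : Type*} [NormedAddCommGroup E] [InnerProductSpace ℝ E] [CompleteSpace E]

theorem image_closedBall_subset_of_mul_self_eq {K : Set E} (hK : Convex ℝ K)
    (hB : closedBall (0 : E) 1 ⊆ K) {T : E →L[ℝ] E} (hT : T '' closedBall 0 1 ⊆ K)
    {t : ℝ} (ht : t ∈ Icc (0 : ℝ) 1) {S : E →L[ℝ] E} (hS : IsSelfAdjoint S)
    (hSS : S * S = (1 - t) • 1 + t • (T * star T)) (hsurj : Function.Surjective S) :
    S '' closedBall 0 1 ⊆ K := by
  rintro _ ⟨_, hx, rfl⟩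
  obtain ⟨u, rfl⟩ := hsurj ‹_›
  set w := ContinuousLinearMap.adjoint T u
  have hSSu : S (S u) = (1 - t) • u + T (t • w) := by
    simpa [map_smul, ContinuousLinearMap.star_eq_adjoint] using congr($hSS u)
  have hnorm : ‖S u‖ ^ 2 = (1 - t) * ‖u‖ ^ 2 + t * ‖w‖ ^ 2 := by
    rw [← real_inner_self_eq_norm_sq, ← ContinuousLinearMap.adjoint_inner_left,
      hS.adjoint_eq, hSSu, inner_add_left, ← ContinuousLinearMap.adjoint_inner_right,
      real_inner_smul_left, real_inner_smul_left, real_inner_self_eq_norm_sq,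
      real_inner_self_eq_norm_sq]
  have hSu : ‖S u‖ ≤ 1 := mem_closedBall_zero_iff.1 hx
  -- `(1-t)a² + tc² - ((1-t)a + tc)² = t(1-t)(a-c)²`
  have hconv : (1 - t) * ‖u‖ + t * ‖w‖ ≤ 1 := by
    nlinarith [mul_nonneg (mul_nonneg ht.1 (sub_nonneg.2 ht.2)) (sq_nonneg (‖u‖ - ‖w‖)),
      norm_nonneg (S u), norm_nonneg u, norm_nonneg w, ht.1, ht.2]
  rw [hSSu]
  refine hK.add_map_mem_of_norm_add_norm_le_one hB hT ?_
  rwa [norm_smul, norm_smul, Real.norm_of_nonneg (sub_nonneg.2 ht.2), Real.norm_of_nonneg ht.1]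

end Interpolation

theorem Seminorm.gauge_closedBall {E : Type*} [AddCommGroup E] [Module ℝ E] (p : Seminorm ℝ E) :
    gauge (p.closedBall 0 1) = p := by
  refine le_antisymm (fun x => ?_) (fun x => ?_)
  · calc gauge (p.closedBall 0 1) x ≤ gauge (p.ball 0 1) x :=
          gauge_mono (p.absorbent_ball_zero one_pos) (p.ball_subset_closedBall 0 1) x
      _ = p x := by rw [p.gauge_ball]
  · refine le_csInf (p.absorbent_closedBall_zero one_pos).gauge_set_nonempty ?_
    rintro r ⟨hr, y, hy, hyx⟩
    rw [p.mem_closedBall_zero] at hy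
    rw [← hyx, map_smul_eq_mul, Real.norm_eq_abs, abs_of_pos hr]
    exact mul_le_of_le_one_right hr.le hy

section Polar

variable {E F : Type*} [NormedAddCommGroup E] [InnerProductSpace ℝ E]
  [NormedAddCommGroup F] [InnerProductSpace ℝ F]

theorem forall_mem_closedBall_inner_le_one_iff (w : E) :
    (∀ z ∈ closedBall (0 : E) 1, inner ℝ z w ≤ 1) ↔ ‖w‖ ≤ 1 := by
  refine ⟨fun h => ?_, fun h z hz => ?_⟩
  · have := h _ (inv_norm_smul_mem_closedBall w)
    rwa [real_inner_smul_left, real_inner_self_eq_norm_sq, sq, ← mul_assoc,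
      inv_mul_mul_self] at this
  · exact (real_inner_le_norm z w).trans
      (mul_le_one₀ (mem_closedBall_zero_iff.1 hz) (norm_nonneg w) h)

theorem setOf_forall_mem_closedBall_inner_le_one :
    {y : E | ∀ z ∈ closedBall (0 : E) 1, inner ℝ z y ≤ 1} = closedBall 0 1 :=
  Set.ext fun y => (forall_mem_closedBall_inner_le_one_iff y).trans mem_closedBall_zero_iff.symm

variable [CompleteSpace E] [CompleteSpace F]

theorem setOf_forall_mem_image_inner_le_one (T : F →L[ℝ] E) :
    {y : E | ∀ z ∈ T '' closedBall 0 1, inner ℝ z y ≤ 1} =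
      {y | ‖ContinuousLinearMap.adjoint T y‖ ≤ 1} := by
  ext y
  simp only [mem_ofPred_eq, forall_mem_image, ← ContinuousLinearMap.adjoint_inner_right]
  exact forall_mem_closedBall_inner_le_one_iff _

theorem gauge_polar_image_closedBall (T : F →L[ℝ] E) (x : E) :
    gauge {y : E | ∀ z ∈ T '' closedBall 0 1, inner ℝ z y ≤ 1} x =
      ‖ContinuousLinearMap.adjoint T x‖ := by
  have : {y : E | ‖ContinuousLinearMap.adjoint T y‖ ≤ 1} =
      ((normSeminorm ℝ F).comp (ContinuousLinearMap.adjoint T).toLinearMap).closedBall 0 1 := by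
    ext; simp
  rw [setOf_forall_mem_image_inner_le_one, this, Seminorm.gauge_closedBall]
  rfl

end Polar

theorem HasDerivAt.nonpos_of_forall_Ioo_le {f : ℝ → ℝ} {f' a b : ℝ} (hf : HasDerivAt f f' a)
    (hab : a < b) (h : ∀ t ∈ Ioo a b, f t ≤ f a) : f' ≤ 0 := by
  have hlim := hasDerivWithinAt_iff_tendsto_slope.1 (hf.hasDerivWithinAt (s := Ioi a))
  rw [sdiff_singleton_eq_self self_notMem_Ioi] at hlim
  refine le_of_tendsto hlim ?_
  filter_upwards [Ioo_mem_nhdsGT hab] with t ht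
  rw [slope_def_field]
  exact div_nonpos_of_nonpos_of_nonneg (sub_nonpos.2 (h t ht)) (sub_nonneg.2 ht.1.le)

open Polynomial in
theorem Matrix.trace_le_card_of_det_le_one {ι : Type*} [Fintype ι] [DecidableEq ι]
    (P : Matrix ι ι ℝ) (h : ∀ t ∈ Ioo (0 : ℝ) 1, ((1 - t) • 1 + t • P).det ≤ 1) :
    P.trace ≤ Fintype.card ι := by
  set g : ℝ[X] := det (1 + (X : ℝ[X]) • (P - 1).map C)
  have hg : ∀ t, g.eval t = ((1 - t) • 1 + t • P).det := fun t => by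
    rw [← coe_evalRingHom, RingHom.map_det]
    congr 1
    ext i j
    by_cases hij : i = j <;> simp [hij] <;> ring
  have hderiv : HasDerivAt (fun t => g.eval t) (P - 1).trace 0 := by
    rw [← derivative_det_one_add_X_smul]
    exact g.hasDerivAt 0
  have := hderiv.nonpos_of_forall_Ioo_le one_pos fun t ht => by
    simpa [hg] using h t ht
  simpa [Matrix.trace_sub] using this

theorem ae_norm_eq_one_of_measure_compl_sphere {E : Type*} [NormedAddCommGroup E]
    [MeasurableSpace E] {μ : Measure E} (hsupp : μ (sphere (0 : E) 1)ᶜ = 0) :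
    ∀ᵐ x ∂μ, ‖x‖ = 1 :=
  (show ∀ᵐ x ∂μ, x ∈ sphere (0 : E) 1 from mem_ae_iff.2 hsupp).mono
    fun _ => mem_sphere_zero_iff_norm.1

section Isotropy

variable {E : Type*} [NormedAddCommGroup E] [InnerProductSpace ℝ E]
  [MeasurableSpace E] [BorelSpace E] {μ : Measure E}

theorem integrable_inner_sq [IsFiniteMeasure μ] (hsupp : μ (sphere (0 : E) 1)ᶜ = 0) (v : E) :
    Integrable (fun x => inner ℝ v x ^ 2) μ := by
  refine Integrable.of_bound (((innerSL ℝ v).continuous.pow 2).aestronglyMeasurable) (‖v‖ ^ 2) ?_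
  filter_upwards [ae_norm_eq_one_of_measure_compl_sphere hsupp] with x hx
  rw [Real.norm_of_nonneg (sq_nonneg _), ← sq_abs]
  simpa [hx] using pow_le_pow_left₀ (abs_nonneg _) (abs_real_inner_le_norm v x) 2

theorem integral_comp_linearIsometryEquiv (hinv : ∀ O : E ≃ₗᵢ[ℝ] E, μ.map O = μ)
    (O : E ≃ₗᵢ[ℝ] E) (f : E → ℝ) : ∫ x, f (O x) ∂μ = ∫ x, f x ∂μ :=
  MeasurePreserving.integral_comp' (f := O.toHomeomorph.toMeasurableEquiv)
    ⟨O.continuous.measurable, hinv O⟩ f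

theorem integral_inner_sq_eq_of_norm_eq (hinv : ∀ O : E ≃ₗᵢ[ℝ] E, μ.map O = μ) {v w : E}
    (h : ‖v‖ = ‖w‖) : ∫ x, inner ℝ v x ^ 2 ∂μ = ∫ x, inner ℝ w x ^ 2 ∂μ := by
  set R := (ℝ ∙ (v - w))ᗮ.reflection
  have hRv : R v = w := Submodule.reflection_sub h
  calc ∫ x, inner ℝ v x ^ 2 ∂μ = ∫ x, inner ℝ w (R x) ^ 2 ∂μ := by
        simp_rw [← R.inner_map_map v, hRv]
    _ = ∫ x, inner ℝ w x ^ 2 ∂μ := integral_comp_linearIsometryEquiv hinv R (inner ℝ w · ^ 2)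

variable [FiniteDimensional ℝ E] [IsProbabilityMeasure μ]

theorem integral_inner_sq (hsupp : μ (sphere (0 : E) 1)ᶜ = 0)
    (hinv : ∀ O : E ≃ₗᵢ[ℝ] E, μ.map O = μ) (v : E) :
    ∫ x, inner ℝ v x ^ 2 ∂μ = ‖v‖ ^ 2 / Module.finrank ℝ E := by
  set b := stdOrthonormalBasis ℝ E
  have hscale : ∀ i, ∫ x, inner ℝ v x ^ 2 ∂μ = ‖v‖ ^ 2 * ∫ x, inner ℝ (b i) x ^ 2 ∂μ := by
    intro i
    rw [integral_inner_sq_eq_of_norm_eq hinv (w := ‖v‖ • b i) (by simp [norm_smul]),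
      ← integral_const_mul]
    simp_rw [real_inner_smul_left, mul_pow]
  have hsum : ∑ i, ∫ x, inner ℝ (b i) x ^ 2 ∂μ = 1 := by
    rw [← integral_finsetSum _ fun i _ => integrable_inner_sq hsupp (b i)]
    calc ∫ x, ∑ i, inner ℝ (b i) x ^ 2 ∂μ = ∫ _, (1 : ℝ) ∂μ := by
          refine integral_congr_ae ?_
          filter_upwards [ae_norm_eq_one_of_measure_compl_sphere hsupp] with x hx
          simpa [Real.norm_eq_abs, sq_abs, hx] using b.sum_sq_norm_inner_right x
      _ = 1 := by simp
  have hdim : (Module.finrank ℝ E : ℝ) ≠ 0 := by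
    intro h
    have : IsEmpty (Fin (Module.finrank ℝ E)) := by rw [Nat.cast_eq_zero.1 h]; infer_instance
    simp at hsum
  rw [eq_div_iff hdim]
  calc (∫ x, inner ℝ v x ^ 2 ∂μ) * Module.finrank ℝ E
      = ∑ i : Fin (Module.finrank ℝ E), ∫ x, inner ℝ v x ^ 2 ∂μ := by
        rw [Finset.sum_const, Finset.card_univ, Fintype.card_fin, nsmul_eq_mul, mul_comm]
    _ = ‖v‖ ^ 2 := by
        rw [Finset.sum_congr rfl fun i _ => hscale i, ← Finset.mul_sum, hsum, mul_one]

theorem integral_norm_adjoint_apply_sq (hsupp : μ (sphere (0 : E) 1)ᶜ = 0)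
    (hinv : ∀ O : E ≃ₗᵢ[ℝ] E, μ.map O = μ) {F ι : Type*} [NormedAddCommGroup F]
    [InnerProductSpace ℝ F] [CompleteSpace F] [Fintype ι] (b : OrthonormalBasis ι ℝ F)
    (T : F →L[ℝ] E) :
    ∫ x, ‖ContinuousLinearMap.adjoint T x‖ ^ 2 ∂μ = (∑ i, ‖T (b i)‖ ^ 2) / Module.finrank ℝ E := by
  have hexpand : ∀ x, ‖ContinuousLinearMap.adjoint T x‖ ^ 2 = ∑ i, inner ℝ (T (b i)) x ^ 2 := by
    intro x
    simp_rw [← b.sum_sq_norm_inner_right, ContinuousLinearMap.adjoint_inner_right,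
      Real.norm_eq_abs, sq_abs]
  simp_rw [hexpand]
  rw [integral_finsetSum _ fun i _ => integrable_inner_sq hsupp _, Finset.sum_div]
  exact Finset.sum_congr rfl fun i _ => integral_inner_sq hsupp hinv _

end Isotropy

theorem Matrix.sum_norm_sq_toEuclideanCLM_basisFun {ι : Type*} [Fintype ι] [DecidableEq ι]
    (A : Matrix ι ι ℝ) :
    ∑ j, ‖Matrix.toEuclideanCLM (𝕜 := ℝ) A (EuclideanSpace.basisFun ι ℝ j)‖ ^ 2 =
      (A * Aᴴ).trace := by
  simp_rw [EuclideanSpace.real_norm_sq_eq, Matrix.ofLp_toEuclideanCLM,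
    EuclideanSpace.basisFun_apply]
  simp only [PiLp.ofLp_single, Matrix.mulVec_single, MulOpposite.op_one, Pi.smul_apply,
    Matrix.col_apply, one_smul, sq, Matrix.trace, Matrix.conjTranspose_eq_transpose_of_trivial,
    Matrix.diag_apply, Matrix.mul_apply, Matrix.transpose_apply]
  exact Finset.sum_comm

section John

variable {n : ℕ}

theorem abs_det_le_one_of_image_subset {K : Set (EuclideanSpace ℝ (Fin n))}
    (hmax : ∀ F : Set (EuclideanSpace ℝ (Fin n)), IsEllipsoid F → F ⊆ K →
      volume F ≤ volume (closedBall (0 : EuclideanSpace ℝ (Fin n)) 1))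
    {M : Matrix (Fin n) (Fin n) ℝ} (hM : M.det ≠ 0)
    (hMK : Matrix.toEuclideanLin M '' closedBall 0 1 ⊆ K) : |M.det| ≤ 1 := by
  have hdet : LinearMap.det (Matrix.toEuclideanLin M) = M.det := LinearMap.det_toLpLin 2 M
  rw [← hdet] at hM ⊢
  have hvol : volume (Matrix.toEuclideanLin M '' closedBall 0 1) ≤
      1 * volume (closedBall (0 : EuclideanSpace ℝ (Fin n)) 1) := by
    rw [one_mul]
    exact hmax _ ⟨(Matrix.toEuclideanLin M).equivOfDetNeZero hM, rfl⟩ hMK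
  rw [Measure.addHaar_image_linearMap, ENNReal.mul_le_mul_iff_left
    (measure_closedBall_pos volume 0 one_pos).ne' measure_closedBall_lt_top.ne] at hvol
  exact ENNReal.ofReal_le_one.1 hvol

open scoped MatrixOrder in
theorem trace_mul_conjTranspose_le_of_image_subset {K : Set (EuclideanSpace ℝ (Fin n))}
    (hK : Convex ℝ K) (hB : closedBall (0 : EuclideanSpace ℝ (Fin n)) 1 ⊆ K)
    (hmax : ∀ F : Set (EuclideanSpace ℝ (Fin n)), IsEllipsoid F → F ⊆ K →
      volume F ≤ volume (closedBall (0 : EuclideanSpace ℝ (Fin n)) 1))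
    {A : Matrix (Fin n) (Fin n) ℝ} (hA : Matrix.toEuclideanCLM (𝕜 := ℝ) A '' closedBall 0 1 ⊆ K) :
    (A * Aᴴ).trace ≤ n := by
  refine ((A * Aᴴ).trace_le_card_of_det_le_one fun t ht => ?_).trans_eq (by simp)
  set Q := (1 - t) • (1 : Matrix (Fin n) (Fin n) ℝ) + t • (A * Aᴴ)
  have hQ : Q.PosDef := (Matrix.PosDef.one.smul (sub_pos.2 ht.2)).add_posSemidef
    ((Matrix.posSemidef_self_mul_conjTranspose A).smul ht.1.le)
  set M := CFC.sqrt Q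
  have hMM : M * M = Q := CFC.sqrt_mul_sqrt_self Q hQ.posSemidef.nonneg
  have hdetQ : Q.det = M.det ^ 2 := by rw [← hMM, Matrix.det_mul, sq]
  have hM : M.det ≠ 0 := fun h => hQ.det_pos.ne' (by rw [hdetQ, h, sq, mul_zero])
  have hMK : Matrix.toEuclideanCLM (𝕜 := ℝ) M '' closedBall 0 1 ⊆ K := by
    refine image_closedBall_subset_of_mul_self_eq hK hB hA (Ioo_subset_Icc_self ht)
      ((IsSelfAdjoint.of_nonneg (CFC.sqrt_nonneg Q)).map _) ?_ ?_
    · rw [← map_mul, hMM, map_add, map_smul, map_smul, map_one, map_mul,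
        ← Matrix.star_eq_conjTranspose, map_star]
    · exact (ContinuousLinearMap.isUnit_iff_bijective.1
        (((Matrix.isUnit_iff_isUnit_det M).2 hM.isUnit).map _)).2
  rw [hdetQ, ← sq_abs]
  exact pow_le_one₀ (abs_nonneg _) (abs_det_le_one_of_image_subset hmax hM hMK)

end John

theorem mean_width_extremality_of_LJ_general
    (n : ℕ) (K : Set (EuclideanSpace ℝ (Fin n)))
    (hKconv : Convex ℝ K)
    (hball : closedBall (0 : EuclideanSpace ℝ (Fin n)) 1 ⊆ K)
    (hmax : ∀ F : Set (EuclideanSpace ℝ (Fin n)), IsEllipsoid F → F ⊆ K →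
      volume F ≤ volume (closedBall (0 : EuclideanSpace ℝ (Fin n)) 1))
    (μ : Measure (EuclideanSpace ℝ (Fin n))) [IsProbabilityMeasure μ]
    (hsupp : μ (sphere (0 : EuclideanSpace ℝ (Fin n)) 1)ᶜ = 0)
    (hinv : ∀ O : EuclideanSpace ℝ (Fin n) ≃ₗᵢ[ℝ] EuclideanSpace ℝ (Fin n),
      μ.map O = μ) :
    (∀ F : Set (EuclideanSpace ℝ (Fin n)), IsEllipsoid F → F ⊆ K →
      (∫ x, (gauge {y | ∀ z ∈ F, (inner ℝ z y : ℝ) ≤ 1} x) ^ 2 ∂μ) ≤ 1) ∧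
    (∫ x, (gauge {y | ∀ z ∈ closedBall (0 : EuclideanSpace ℝ (Fin n)) 1,
        (inner ℝ z y : ℝ) ≤ 1} x) ^ 2 ∂μ) = 1 := by
  refine ⟨?_, ?_⟩
  · rintro _ ⟨L, rfl⟩ hLK
    obtain ⟨A, hA⟩ : ∃ A, Matrix.toEuclideanCLM (𝕜 := ℝ) A = L.toLinearMap.toContinuousLinearMap :=
      Matrix.toEuclideanCLM.surjective _
    calc ∫ x, gauge {y | ∀ z ∈ L '' closedBall 0 1, inner ℝ z y ≤ 1} x ^ 2 ∂μ
        = ∫ x, ‖ContinuousLinearMap.adjoint (Matrix.toEuclideanCLM (𝕜 := ℝ) A) x‖ ^ 2 ∂μ := by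
          rw [hA]
          simp_rw [← gauge_polar_image_closedBall]
          rfl
      _ = (A * Aᴴ).trace / n := by
          rw [integral_norm_adjoint_apply_sq hsupp hinv (EuclideanSpace.basisFun _ ℝ),
            A.sum_norm_sq_toEuclideanCLM_basisFun, finrank_euclideanSpace_fin]
      _ ≤ 1 := div_le_one_of_le₀
          (trace_mul_conjTranspose_le_of_image_subset hKconv hball hmax (by rwa [hA]))
          n.cast_nonneg
  · rw [setOf_forall_mem_closedBall_inner_le_one]
    calc ∫ x, gauge (closedBall 0 1) x ^ 2 ∂μ = ∫ _, (1 : ℝ) ∂μ := by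
          refine integral_congr_ae ?_
          filter_upwards [ae_norm_eq_one_of_measure_compl_sphere hsupp] with x hx
          rw [gauge_closedBall zero_le_one, hx, div_one, one_pow]
      _ = 1 := by simp

/-- If the Löwner–John (maximal-volume inscribed) ellipsoid of the symmetric convex body `K`
is the unit ball `B`, then `M*(F)² = ∫_{S^{n-1}} ‖x‖²_{F°} dμ ≤ 1` for every ellipsoid
`F ⊆ K`, where `F°` is the polar body, with equality for `F = B`. -/
theorem mean_width_extremality_of_LJ
    (n : ℕ) (K : Set (EuclideanSpace ℝ (Fin n)))
    (hKconv : Convex ℝ K) (hKcomp : IsCompact K) (hKsymm : K = -K)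
    (hKint : (0 : EuclideanSpace ℝ (Fin n)) ∈ interior K)
    (hball : closedBall (0 : EuclideanSpace ℝ (Fin n)) 1 ⊆ K)
    (hmax : ∀ F : Set (EuclideanSpace ℝ (Fin n)), IsEllipsoid F → F ⊆ K →
      volume F ≤ volume (closedBall (0 : EuclideanSpace ℝ (Fin n)) 1))
    (μ : Measure (EuclideanSpace ℝ (Fin n))) [IsProbabilityMeasure μ]
    (hsupp : μ (sphere (0 : EuclideanSpace ℝ (Fin n)) 1)ᶜ = 0)
    (hinv : ∀ O : EuclideanSpace ℝ (Fin n) ≃ₗᵢ[ℝ] EuclideanSpace ℝ (Fin n),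
      μ.map O = μ) :
    (∀ F : Set (EuclideanSpace ℝ (Fin n)), IsEllipsoid F → F ⊆ K →
      (∫ x, (gauge {y | ∀ z ∈ F, (inner ℝ z y : ℝ) ≤ 1} x) ^ 2 ∂μ) ≤ 1) ∧
    (∫ x, (gauge {y | ∀ z ∈ closedBall (0 : EuclideanSpace ℝ (Fin n)) 1,
        (inner ℝ z y : ℝ) ≤ 1} x) ^ 2 ∂μ) = 1 :=
  mean_width_extremality_of_LJ_general n K hKconv hball hmax μ hsupp hinv

end
end

section
/- Let K ⊂ ℝⁿ be a smooth, strictly convex symmetric body, and let F₁, F₂ be ellipsoids each containing K such that there exists a finite set of points u₁,...,u_s ∈ ∂K ∩ ∂F₁ ∩ ∂F₂ spanning ℝⁿ, and at each uᵢ the (unique) supporting hyperplane of K supports both F₁ and F₂. Then F₁ = F₂. -/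
/-!
An ellipsoid `L '' closedBall 0 1` has a unique supporting functional at each boundary point `v`,
namely `y ↦ ⟪L⁻¹ v, L⁻¹ y⟫`: composed with `L` it supports the unit ball at the unit vector
`L⁻¹ v`, and by the equality case of Cauchy–Schwarz the Riesz vector of such a functional is
`L⁻¹ v` itself. Hence the bilinear forms `(w, y) ↦ ⟪Lₖ⁻¹ w, Lₖ⁻¹ y⟫` of the two ellipsoids agree
whenever `w` is a contact point, so everywhere by the spanning hypothesis, and each ellipsoid is
the unit sublevel set of its form.
-/

open Metric Set

noncomputable section

namespace ContinuousLinearMap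

variable {E : Type*} [NormedAddCommGroup E] [NormedSpace ℝ E]

theorem norm_le_one_of_le_one_on_closedBall {f : E →L[ℝ] ℝ}
    (hf : ∀ x ∈ closedBall (0 : E) 1, f x ≤ 1) : ‖f‖ ≤ 1 := by
  refine opNorm_le_of_unit_norm zero_le_one fun x hx => abs_le.2 ⟨?_, ?_⟩
  · have := hf (-x) (by simp [hx])
    rw [map_neg] at this
    linarith
  · exact hf x (by simp [hx])

end ContinuousLinearMap

section Ellipsoid

open scoped RealInnerProductSpace

variable {E F : Type*} [NormedAddCommGroup E] [NormedSpace ℝ E]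
  [NormedAddCommGroup F] [InnerProductSpace ℝ F]

theorem eq_innerSL_of_supports_closedBall [CompleteSpace F] {x : F} (hx : ‖x‖ = 1)
    {f : F →L[ℝ] ℝ} (hfx : f x = 1) (hf : ∀ y ∈ closedBall (0 : F) 1, f y ≤ 1) :
    f = innerSL ℝ x := by
  set w := (InnerProductSpace.toDual ℝ F).symm f
  have hwx : ⟪w, x⟫ = 1 := by rw [InnerProductSpace.toDual_symm_apply, hfx]
  have hw_le : ‖w‖ ≤ 1 := by
    rw [LinearIsometryEquiv.norm_map]
    exact ContinuousLinearMap.norm_le_one_of_le_one_on_closedBall hf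
  have hw_norm : ‖w‖ = 1 :=
    le_antisymm hw_le (by simpa [hx, hwx] using real_inner_le_norm w x)
  have hw : w = x := (inner_eq_one_iff_of_norm_eq_one hw_norm hx).1 hwx
  ext y
  rw [innerSL_apply_apply, ← hw]
  exact InnerProductSpace.toDual_symm_apply.symm

theorem mem_image_closedBall_iff (L : F ≃L[ℝ] E) {y : E} :
    y ∈ L '' closedBall 0 1 ↔ ‖L.symm y‖ ≤ 1 := by
  rw [L.image_eq_preimage_symm, mem_preimage, mem_closedBall_zero_iff]

theorem norm_symm_eq_one_of_mem_frontier (L : F ≃L[ℝ] E) {y : E}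
    (hy : y ∈ frontier (L '' closedBall 0 1)) : ‖L.symm y‖ = 1 := by
  rw [← L.coe_toHomeomorph, ← L.toHomeomorph.image_frontier,
    frontier_closedBall 0 one_ne_zero] at hy
  obtain ⟨z, hz, rfl⟩ := hy
  simpa using hz

def ellipsoidForm (L : F ≃L[ℝ] E) : E →ₗ[ℝ] E →ₗ[ℝ] ℝ :=
  (innerₛₗ ℝ).compl₁₂ (L.symm : E →ₗ[ℝ] F) (L.symm : E →ₗ[ℝ] F)

theorem ellipsoidForm_apply (L : F ≃L[ℝ] E) (w y : E) :
    ellipsoidForm L w y = ⟪L.symm w, L.symm y⟫ := rfl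

theorem ellipsoidForm_self (L : F ≃L[ℝ] E) (y : E) : ellipsoidForm L y y = ‖L.symm y‖ ^ 2 :=
  real_inner_self_eq_norm_sq _

theorem eq_ellipsoidForm_of_supports [CompleteSpace F] (L : F ≃L[ℝ] E) {v : E}
    (hv : v ∈ frontier (L '' closedBall 0 1)) {f : E →L[ℝ] ℝ} (hfv : f v = 1)
    (hf : ∀ x ∈ L '' closedBall 0 1, f x ≤ 1) : (f : E →ₗ[ℝ] ℝ) = ellipsoidForm L v := by
  have hfL : f.comp (L : F →L[ℝ] E) = innerSL ℝ (L.symm v) :=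
    eq_innerSL_of_supports_closedBall (norm_symm_eq_one_of_mem_frontier L hv)
      (by simpa using hfv) fun z hz => hf (L z) (mem_image_of_mem L hz)
  ext y
  simpa [ellipsoidForm_apply] using congr($hfL (L.symm y))

theorem image_closedBall_eq_of_common_supports [CompleteSpace F] {ι : Type*}
    (L₁ L₂ : F ≃L[ℝ] E) (u : ι → E)
    (hspan : Submodule.span ℝ (range u) = ⊤)
    (hu : ∀ i, u i ∈ frontier (L₁ '' closedBall 0 1) ∩ frontier (L₂ '' closedBall 0 1))
    (hsupport : ∀ i, ∃ f : E →L[ℝ] ℝ, f (u i) = 1 ∧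
      (∀ x ∈ L₁ '' closedBall 0 1, f x ≤ 1) ∧ (∀ x ∈ L₂ '' closedBall 0 1, f x ≤ 1)) :
    L₁ '' closedBall 0 1 = L₂ '' closedBall 0 1 := by
  have hform : ellipsoidForm L₁ = ellipsoidForm L₂ := by
    refine LinearMap.ext_on_range hspan fun i => ?_
    obtain ⟨f, hfu, hf₁, hf₂⟩ := hsupport i
    rw [← eq_ellipsoidForm_of_supports L₁ (hu i).1 hfu hf₁,
      ← eq_ellipsoidForm_of_supports L₂ (hu i).2 hfu hf₂]
  have hnorm (y : E) : ‖L₁.symm y‖ = ‖L₂.symm y‖ := by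
    have := congr($hform y y)
    rw [ellipsoidForm_self, ellipsoidForm_self] at this
    exact (pow_left_inj₀ (norm_nonneg _) (norm_nonneg _) two_ne_zero).1 this
  ext y
  rw [mem_image_closedBall_iff, mem_image_closedBall_iff, hnorm]

end Ellipsoid

theorem ellipsoids_eq_of_common_supporting_contact_points_general
    (n : ℕ) (K : Set (EuclideanSpace ℝ (Fin n)))
    (F₁ F₂ : Set (EuclideanSpace ℝ (Fin n)))
    (hF₁ : IsEllipsoid F₁) (hF₂ : IsEllipsoid F₂)
    (s : ℕ) (u : Fin s → EuclideanSpace ℝ (Fin n))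
    (hu : ∀ i, u i ∈ frontier K ∩ frontier F₁ ∩ frontier F₂)
    (hspan : Submodule.span ℝ (Set.range u) = ⊤)
    (hsupport : ∀ i, ∃ f : EuclideanSpace ℝ (Fin n) →L[ℝ] ℝ,
      f (u i) = 1 ∧ (∀ x ∈ K, f x ≤ 1) ∧ (∀ x ∈ F₁, f x ≤ 1) ∧ (∀ x ∈ F₂, f x ≤ 1)) :
    F₁ = F₂ := by
  obtain ⟨L₁, rfl⟩ := hF₁
  obtain ⟨L₂, rfl⟩ := hF₂
  refine image_closedBall_eq_of_common_supports L₁.toContinuousLinearEquiv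
    L₂.toContinuousLinearEquiv u hspan (fun i => ⟨(hu i).1.2, (hu i).2⟩) fun i => ?_
  obtain ⟨f, hfu, -, hf₁, hf₂⟩ := hsupport i
  exact ⟨f, hfu, hf₁, hf₂⟩

/-- If `K` is a smooth strictly convex symmetric body and `F₁, F₂` are ellipsoids containing
`K` which share with `K` a spanning set of common boundary points `u₁, …, u_s`, at each of
which the unique supporting hyperplane of `K` supports both `F₁` and `F₂`, then `F₁ = F₂`. -/
theorem ellipsoids_eq_of_common_supporting_contact_points
    (n : ℕ) (K : Set (EuclideanSpace ℝ (Fin n)))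
    (hKconv : Convex ℝ K) (hKcomp : IsCompact K) (hKsymm : K = -K)
    (hKint : (0 : EuclideanSpace ℝ (Fin n)) ∈ interior K)
    (hKstrict : StrictConvex ℝ K)
    (hKsmooth : ∀ u ∈ frontier K,
      ∃! f : EuclideanSpace ℝ (Fin n) →L[ℝ] ℝ, f u = 1 ∧ ∀ x ∈ K, f x ≤ 1)
    (F₁ F₂ : Set (EuclideanSpace ℝ (Fin n)))
    (hF₁ : IsEllipsoid F₁) (hF₂ : IsEllipsoid F₂)
    (hKF₁ : K ⊆ F₁) (hKF₂ : K ⊆ F₂)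
    (s : ℕ) (u : Fin s → EuclideanSpace ℝ (Fin n))
    (hu : ∀ i, u i ∈ frontier K ∩ frontier F₁ ∩ frontier F₂)
    (hspan : Submodule.span ℝ (Set.range u) = ⊤)
    (hsupport : ∀ i, ∃ f : EuclideanSpace ℝ (Fin n) →L[ℝ] ℝ,
      f (u i) = 1 ∧ (∀ x ∈ K, f x ≤ 1) ∧ (∀ x ∈ F₁, f x ≤ 1) ∧ (∀ x ∈ F₂, f x ≤ 1)) :
    F₁ = F₂ :=
  ellipsoids_eq_of_common_supporting_contact_points_general n K F₁ F₂ hF₁ hF₂ s u hu hspan hsupport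

end
end
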